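/- arXiv:1506.02582 — 5 statements merged into one kernel-verified Lean document; each statement's English description precedes it below -/
import Mathlib

section
/- For all integers 0 ≤ k < t, almost surely 𝔼[ρ_k γ_{k+1} ρ_{k+1} γ_{k+2} ⋯ ρ_{t−1} γ_t | F_k] = ((P_πΓ)^{t−k} 𝟙)(S_k) ≤ 1 and 𝔼[β_{k+1} β_{k+2} ⋯ β_t | F_k] = ((P_πΓΛ)^{t−k} 𝟙)(S_k) ≤ 1, where 𝟙 ∈ ℝ^S is the all-ones vector. Furthermore, as t → ∞, the products ∏_{k=1}^t (ρ_{k−1} γ_k) converge to 0 almost surely, and ∏_{k=1}^t β_k converge to 0 almost surely. -/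
open MeasureTheory Filter Finset

noncomputable section

/-- Importance sampling ratio `ρ(s,a) = π(a|s)/π°(a|s)` (with the convention `0/0 = 0`,
which is automatic for Lean's real division). -/
def rho {S A : Type*} (pol polb : S → A → ℝ) (s : S) (a : A) : ℝ :=
  pol s a / polb s a

/-- Transition matrix of the state chain induced by a policy:
`P_π(s,s') = ∑_a π(a|s) p(s'|s,a)`. -/
def Ppi {S A : Type*} [Fintype A] (p : S → A → S → ℝ) (pol : S → A → ℝ) :
    Matrix S S ℝ :=
  Matrix.of fun s s' => ∑ a, pol s a * p s a s'

/-- The σ-algebra `F_t = σ(S_0, A_0, …, A_{t-1}, S_t)`. -/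
def filtSA {Ω S A : Type*} [MeasurableSpace S] [MeasurableSpace A]
    (St : ℕ → Ω → S) (At : ℕ → Ω → A) (t : ℕ) : MeasurableSpace Ω :=
  (⨆ k ∈ Finset.range (t + 1), MeasurableSpace.comap (St k) inferInstance) ⊔
    ⨆ k ∈ Finset.range t, MeasurableSpace.comap (At k) inferInstance

/-- Basic conditions on the MDP model together with Assumption 1. -/
structure MDPModel {S A : Type*} [Fintype S] [Fintype A] [DecidableEq S]
    (p : S → A → S → ℝ) (pol polb : S → A → ℝ) (γf lamf ifun : S → ℝ) : Prop where
  p_nonneg : ∀ s a s', 0 ≤ p s a s'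
  p_sum : ∀ s a, ∑ s', p s a s' = 1
  pol_nonneg : ∀ s a, 0 ≤ pol s a
  pol_sum : ∀ s, ∑ a, pol s a = 1
  polb_nonneg : ∀ s a, 0 ≤ polb s a
  polb_sum : ∀ s, ∑ a, polb s a = 1
  gamma_mem : ∀ s, γf s ∈ Set.Icc (0 : ℝ) 1
  lambda_mem : ∀ s, lamf s ∈ Set.Icc (0 : ℝ) 1
  interest_nonneg : ∀ s, 0 ≤ ifun s
  /-- Assumption 1(i): `I - P_π Γ` is invertible. -/
  inv : IsUnit (1 - Ppi p pol * Matrix.diagonal γf)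
  /-- Assumption 1(ii): the behavior chain is irreducible. -/
  irred : ∀ s s', ∃ t : ℕ, 0 < t ∧ 0 < (Ppi p polb ^ t) s s'
  /-- Assumption 1(ii): `π°(a|s) > 0` whenever `π(a|s) > 0`. -/
  support : ∀ s a, 0 < pol s a → 0 < polb s a

/-- The state-action process `(S_t, A_t)` is the Markov chain induced by the behavior
policy `π°` (arbitrary initial distribution). -/
structure IsBehaviorChain {S A Ω : Type*} [Fintype S] [Fintype A]
    [MeasurableSpace S] [MeasurableSpace A] [MeasurableSpace Ω]
    (p : S → A → S → ℝ) (polb : S → A → ℝ)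
    (P : Measure Ω) (St : ℕ → Ω → S) (At : ℕ → Ω → A) : Prop where
  smeas : ∀ t, Measurable (St t)
  ameas : ∀ t, Measurable (At t)
  markov : ∀ (t : ℕ) (f : A × S → ℝ),
    (P[(fun ω => f (At t ω, St (t + 1) ω)) | filtSA St At t]) =ᵐ[P]
      fun ω => ∑ a, ∑ s', polb (St t ω) a * p (St t ω) a s' * f (a, s')

/-- The emphatic trace iterates `(e_t, F_t)` with initial condition `(e0, F0)`. -/
structure IsTrace {S A Ω : Type*} {n : ℕ} (pol polb : S → A → ℝ) (γf lamf ifun : S → ℝ)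
    (φ : S → Fin n → ℝ) (St : ℕ → Ω → S) (At : ℕ → Ω → A)
    (e : ℕ → Ω → Fin n → ℝ) (F : ℕ → Ω → ℝ) (e0 : Fin n → ℝ) (F0 : ℝ) : Prop where
  init_e : ∀ ω, e 0 ω = e0
  init_F : ∀ ω, F 0 ω = F0
  rec_F : ∀ t ω, F (t + 1) ω =
    γf (St (t + 1) ω) * rho pol polb (St t ω) (At t ω) * F t ω + ifun (St (t + 1) ω)
  rec_e : ∀ t ω, e (t + 1) ω =
    (lamf (St (t + 1) ω) * γf (St (t + 1) ω) * rho pol polb (St t ω) (At t ω)) • e t ω +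
      (lamf (St (t + 1) ω) * ifun (St (t + 1) ω) +
        (1 - lamf (St (t + 1) ω)) * F (t + 1) ω) • φ (St (t + 1) ω)

end

/-!
Conditioning on `F_k` and peeling off one factor at a time, the Markov property turns each factor
`ρ_j c(S_{j+1})` into one application of the matrix
`K(s,s') = ∑_a π°(a|s) p(s'|s,a) ρ(s,a) c(s') = (P_π diag c)(s,s')`, so the conditional
expectation of the product is `(K^{t-k} 𝟙)(S_k)`, and `K` is substochastic when `0 ≤ c ≤ 1`.
For `c = γ` the vectors `K^m 𝟙` decrease to a fixed point of `K`, which is `0` because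
`I - P_πΓ` is invertible; they then halve over blocks of some fixed length, so
`∑_t 𝔼[∏_{j<t} ρ_j γ_{j+1}]` is finite and the products tend to `0` almost surely. The products
with `λ` are dominated by those without.
-/

open Matrix Topology

theorem summable_of_le_mul_of_shift {u : ℕ → ℝ} {C q : ℝ} (hu0 : ∀ n, 0 ≤ u n)
    (huC : ∀ n, u n ≤ C) (hq : q < 1) (T : ℕ) (hT : ∀ n, u (n + T) ≤ q * u n) :
    Summable u := by
  refine summable_of_sum_range_le (c := T * C / (1 - q)) hu0 fun n => ?_
  -- the partial sums `B n` satisfy `B n ≤ B (T + n) ≤ T * C + q * B n`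
  have hshift : ∑ i ∈ range (T + n), u i ≤ T * C + q * ∑ i ∈ range n, u i := by
    rw [sum_range_add, mul_sum]
    gcongr with i
    · exact (sum_le_sum fun i _ => huC i).trans (by simp)
    · exact add_comm T i ▸ hT i
  have hmono : ∑ i ∈ range n, u i ≤ ∑ i ∈ range (T + n), u i :=
    sum_le_sum_of_subset_of_nonneg (range_mono (by omega)) fun i _ _ => hu0 i
  rw [le_div_iff₀ (sub_pos.2 hq)]
  linarith

namespace Matrix

variable {ι : Type*} [Fintype ι] {M : Matrix ι ι ℝ}

theorem mulVec_mono_of_nonneg (hM : ∀ i j, 0 ≤ M i j) {v w : ι → ℝ} (hvw : v ≤ w) :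
    M *ᵥ v ≤ M *ᵥ w := fun i =>
  sum_le_sum fun j _ => mul_le_mul_of_nonneg_left (hvw j) (hM i j)

theorem mulVec_nonneg_of_nonneg (hM : ∀ i j, 0 ≤ M i j) {v : ι → ℝ} (hv : 0 ≤ v) :
    0 ≤ M *ᵥ v := by
  simpa using mulVec_mono_of_nonneg hM hv

variable [DecidableEq ι] (hM : ∀ i j, 0 ≤ M i j) (hM1 : M *ᵥ 1 ≤ 1)
include hM hM1

theorem pow_mulVec_one_le_one (m : ℕ) : M ^ m *ᵥ 1 ≤ 1 := by
  induction m with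
  | zero => simp
  | succ m ih =>
    rw [pow_succ', ← mulVec_mulVec]
    exact (mulVec_mono_of_nonneg hM ih).trans hM1

theorem pow_succ_mulVec_one_le (m : ℕ) : M ^ (m + 1) *ᵥ 1 ≤ M ^ m *ᵥ 1 := by
  rw [pow_succ, ← mulVec_mulVec]
  exact mulVec_mono_of_nonneg (pow_apply_nonneg hM m) hM1

omit hM1 in
theorem pow_mulVec_one_nonneg (m : ℕ) : 0 ≤ M ^ m *ᵥ 1 :=
  mulVec_nonneg_of_nonneg (pow_apply_nonneg hM m) zero_le_one

/-- The monotone limit `L` of `M ^ m *ᵥ 1` is a fixed point of `M`, hence `0` once `1 - M` is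
invertible. -/
theorem tendsto_pow_mulVec_one_zero (hinv : IsUnit (1 - M)) :
    Tendsto (fun m => M ^ m *ᵥ 1) atTop (𝓝 0) := by
  set L : ι → ℝ := fun i => ⨅ m, (M ^ m *ᵥ 1) i
  have hL : Tendsto (fun m => M ^ m *ᵥ 1) atTop (𝓝 L) := tendsto_pi_nhds.2 fun i =>
    tendsto_atTop_ciInf (antitone_nat_of_succ_le fun m => pow_succ_mulVec_one_le hM hM1 m i)
      ⟨0, by rintro _ ⟨m, rfl⟩; exact pow_mulVec_one_nonneg hM m i⟩
  have hfix : M *ᵥ L = L := by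
    refine tendsto_nhds_unique ?_ (hL.comp (tendsto_add_atTop_nat 1))
    refine ((continuous_const.matrix_mulVec continuous_id).tendsto L).comp hL |>.congr fun m => ?_
    simp [pow_succ', mulVec_mulVec]
  have : (1 - M) *ᵥ L = (1 - M) *ᵥ 0 := by
    rw [sub_mulVec, hfix, one_mulVec, sub_self, mulVec_zero]
  rwa [mulVec_injective_iff_isUnit.2 hinv this] at hL

theorem summable_pow_mulVec_one (hinv : IsUnit (1 - M)) (i : ι) :
    Summable fun m => (M ^ m *ᵥ 1) i := by
  obtain ⟨T, hT⟩ : ∃ T, M ^ T *ᵥ 1 ≤ (1 / 2 : ℝ) • 1 := by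
    have := (tendsto_pi_nhds.1 (tendsto_pow_mulVec_one_zero hM hM1 hinv))
    have hev : ∀ᶠ m in atTop, ∀ j, (M ^ m *ᵥ 1) j ≤ 1 / 2 :=
      eventually_all.2 fun j => (this j).eventually (eventually_le_nhds (by norm_num))
    obtain ⟨T, hT⟩ := hev.exists
    exact ⟨T, fun j => by simpa using hT j⟩
  refine summable_of_le_mul_of_shift (fun m => pow_mulVec_one_nonneg hM m i)
    (fun m => pow_mulVec_one_le_one hM hM1 m i) (by norm_num : (1 / 2 : ℝ) < 1) T fun m => ?_
  have := mulVec_mono_of_nonneg (pow_apply_nonneg hM m) hT i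
  rwa [mulVec_mulVec, ← pow_add, mulVec_smul] at this

end Matrix

theorem ae_tendsto_zero_of_summable_integral_norm {Ω E : Type*} [MeasurableSpace Ω]
    {μ : Measure Ω} [NormedAddCommGroup E] {f : ℕ → Ω → E} (hf : ∀ n, Integrable (f n) μ)
    (hsum : Summable fun n => ∫ ω, ‖f n ω‖ ∂μ) :
    ∀ᵐ ω ∂μ, Tendsto (fun n => f n ω) atTop (𝓝 0) := by
  have hL1 : ∑' n, eLpNorm (f n) 1 μ ≠ ⊤ := by
    simp_rw [eLpNorm_one_eq_lintegral_enorm, ← ofReal_integral_norm_eq_lintegral_enorm (hf _),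
      ← ENNReal.ofReal_tsum_of_nonneg (fun n => integral_nonneg fun _ => norm_nonneg _) hsum]
    exact ENNReal.ofReal_ne_top
  filter_upwards [summable_norm_of_tsum_eLpNorm_ne_top le_rfl
    (fun n => (hf n).aestronglyMeasurable) hL1] with ω hω
  exact tendsto_zero_iff_norm_tendsto_zero.2 hω.tendsto_atTop_zero

section Filtration

variable {Ω S A : Type*} [MeasurableSpace S] [MeasurableSpace A] {St : ℕ → Ω → S}
  {At : ℕ → Ω → A}

theorem filtSA_mono : Monotone (filtSA St At) := fun k t hkt =>
  sup_le_sup (biSup_mono fun i hi => by simp at hi ⊢; omega)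
    (biSup_mono fun i hi => by simp at hi ⊢; omega)

theorem filtSA_le [MeasurableSpace Ω] (hS : ∀ t, Measurable (St t)) (hA : ∀ t, Measurable (At t))
    (t : ℕ) : filtSA St At t ≤ ‹MeasurableSpace Ω› :=
  sup_le (iSup₂_le fun k _ => (hS k).comap_le) (iSup₂_le fun k _ => (hA k).comap_le)

theorem measurable_St_filtSA {k t : ℕ} (hkt : k ≤ t) : Measurable[filtSA St At t] (St k) :=
  Measurable.of_comap_le <| le_sup_of_le_left <|
    le_iSup₂_of_le (f := fun i (_ : i ∈ range (t + 1)) => MeasurableSpace.comap (St i) _) k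
      (by simp; omega) le_rfl

theorem measurable_At_filtSA {k t : ℕ} (hkt : k < t) : Measurable[filtSA St At t] (At k) :=
  Measurable.of_comap_le <| le_sup_of_le_right <|
    le_iSup₂_of_le (f := fun i (_ : i ∈ range t) => MeasurableSpace.comap (At i) _) k
      (by simpa using hkt) le_rfl

end Filtration

/-- `K(s,s') = ∑_a π°(a|s) p(s'|s,a) g(s,a,s')`, so that `𝔼[g(S_t,A_t,S_{t+1}) v(S_{t+1}) | F_t]`
is `(K v)(S_t)`. -/
def weightedKernel {S A : Type*} [Fintype A] (p : S → A → S → ℝ) (polb : S → A → ℝ)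
    (g : S → A → S → ℝ) : Matrix S S ℝ :=
  Matrix.of fun s s' => ∑ a, polb s a * p s a s' * g s a s'

theorem measurable_weight {Ω S A : Type*} [Countable S] [Countable A] [MeasurableSpace S]
    [MeasurableSingletonClass S] [MeasurableSpace A] [MeasurableSingletonClass A]
    {m : MeasurableSpace Ω} (g : S → A → S → ℝ) {X Z : Ω → S} {Y : Ω → A}
    (hX : Measurable[m] X) (hY : Measurable[m] Y) (hZ : Measurable[m] Z) :
    Measurable[m] fun ω => g (X ω) (Y ω) (Z ω) :=
  (measurable_of_countable fun q : S × A × S => g q.1 q.2.1 q.2.2).comp (hX.prodMk (hY.prodMk hZ))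

section Model

variable {S A : Type*} {p : S → A → S → ℝ} {pol polb : S → A → ℝ}

theorem polb_mul_rho (hpol0 : ∀ s a, 0 ≤ pol s a) (hsupp : ∀ s a, 0 < pol s a → 0 < polb s a)
    (s : S) (a : A) : polb s a * rho pol polb s a = pol s a := by
  rcases (hpol0 s a).eq_or_lt with h | h
  · simp [rho, ← h]
  · exact mul_div_cancel₀ _ (hsupp s a h).ne'

variable [Fintype A]

theorem Ppi_nonneg (hp0 : ∀ s a s', 0 ≤ p s a s') (hpol0 : ∀ s a, 0 ≤ pol s a) (s s' : S) :
    0 ≤ Ppi p pol s s' :=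
  sum_nonneg fun a _ => mul_nonneg (hpol0 s a) (hp0 s a s')

variable [Fintype S]

theorem Ppi_mulVec_one (hp1 : ∀ s a, ∑ s', p s a s' = 1) (hpol1 : ∀ s, ∑ a, pol s a = 1) :
    Ppi p pol *ᵥ 1 = 1 := by
  ext s
  simp only [Ppi, mulVec, dotProduct, of_apply, Pi.one_apply, mul_one]
  rw [sum_comm]
  simp [← mul_sum, hp1, hpol1]

variable [DecidableEq S]

theorem weightedKernel_rho_mul (hpol0 : ∀ s a, 0 ≤ pol s a)
    (hsupp : ∀ s a, 0 < pol s a → 0 < polb s a) (c : S → ℝ) :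
    weightedKernel p polb (fun s a s' => rho pol polb s a * c s') = Ppi p pol * diagonal c := by
  ext s s'
  simp only [weightedKernel, Ppi, mul_diagonal, of_apply, sum_mul]
  refine sum_congr rfl fun a _ => ?_
  rw [← polb_mul_rho hpol0 hsupp s a]
  ring

theorem Ppi_mul_diagonal_nonneg (hp0 : ∀ s a s', 0 ≤ p s a s') (hpol0 : ∀ s a, 0 ≤ pol s a)
    {c : S → ℝ} (hc0 : 0 ≤ c) (s s' : S) : 0 ≤ (Ppi p pol * diagonal c) s s' := by
  rw [mul_diagonal]
  exact mul_nonneg (Ppi_nonneg hp0 hpol0 s s') (hc0 s')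

theorem Ppi_mul_diagonal_mulVec_one_le_one (hp0 : ∀ s a s', 0 ≤ p s a s')
    (hp1 : ∀ s a, ∑ s', p s a s' = 1) (hpol0 : ∀ s a, 0 ≤ pol s a)
    (hpol1 : ∀ s, ∑ a, pol s a = 1) {c : S → ℝ} (hc1 : c ≤ 1) :
    (Ppi p pol * diagonal c) *ᵥ 1 ≤ 1 := by
  have hc : diagonal c *ᵥ 1 = c := by ext; simp [mulVec_diagonal]
  rw [← mulVec_mulVec, hc, ← Ppi_mulVec_one hp1 hpol1]
  exact mulVec_mono_of_nonneg (Ppi_nonneg hp0 hpol0) hc1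

end Model

namespace IsBehaviorChain

section FiniteMeasure

variable {S A Ω : Type*} [Fintype S] [Fintype A] [MeasurableSpace S] [MeasurableSingletonClass S]
  [MeasurableSpace A] [MeasurableSingletonClass A] [MeasurableSpace Ω] {P : Measure Ω}
  [IsFiniteMeasure P] {p : S → A → S → ℝ} {polb : S → A → ℝ} {St : ℕ → Ω → S}
  {At : ℕ → Ω → A}

theorem integrable_prod_weight (hchain : IsBehaviorChain p polb P St At) (g : S → A → S → ℝ)
    (J : Finset ℕ) : Integrable (fun ω => ∏ j ∈ J, g (St j ω) (At j ω) (St (j + 1) ω)) P := by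
  obtain ⟨C, hC⟩ := Finite.exists_le fun q : S × A × S => |g q.1 q.2.1 q.2.2|
  refine Integrable.of_bound (Finset.measurable_prod _ fun j _ => measurable_weight g
    (hchain.smeas j) (hchain.ameas j) (hchain.smeas (j + 1))).aestronglyMeasurable (C ^ #J)
    (ae_of_all _ fun ω => ?_)
  rw [Real.norm_eq_abs, abs_prod, ← prod_const]
  exact prod_le_prod (fun _ _ => abs_nonneg _) fun j _ => hC (St j ω, At j ω, St (j + 1) ω)

theorem integrable_weight (hchain : IsBehaviorChain p polb P St At) (g : S → A → S → ℝ)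
    (t : ℕ) : Integrable (fun ω => g (St t ω) (At t ω) (St (t + 1) ω)) P := by
  simpa using hchain.integrable_prod_weight g {t}

theorem condExp_weight (hchain : IsBehaviorChain p polb P St At) (h : S → A → S → ℝ) (t : ℕ) :
    P[fun ω => h (St t ω) (At t ω) (St (t + 1) ω) | filtSA St At t] =ᵐ[P]
      fun ω => ∑ a, ∑ s', polb (St t ω) a * p (St t ω) a s' * h (St t ω) a s' := by
  classical
  set δ : S → Ω → ℝ := fun s ω => if St t ω = s then 1 else 0
  -- freeze the `F_t`-measurable first argument by splitting over the value of `S_t`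
  have hsplit : (fun ω => h (St t ω) (At t ω) (St (t + 1) ω)) =
      ∑ s, δ s * fun ω => h s (At t ω) (St (t + 1) ω) := by
    ext ω; simp [δ, ite_mul]
  have hterm (s : S) : P[δ s * fun ω => h s (At t ω) (St (t + 1) ω) | filtSA St At t] =ᵐ[P]
      fun ω => δ s ω * ∑ a, ∑ s', polb (St t ω) a * p (St t ω) a s' * h s a s' := by
    have hδ : StronglyMeasurable[filtSA St At t] (δ s) :=
      ((measurable_of_countable fun s₀ => if s₀ = s then (1 : ℝ) else 0).comp
        (measurable_St_filtSA le_rfl)).stronglyMeasurable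
    refine (condExp_mul_of_stronglyMeasurable_left hδ
      (hchain.integrable_weight (fun s₀ a s' => (if s₀ = s then 1 else 0) * h s a s') t)
      (hchain.integrable_weight (fun _ a s' => h s a s') t)).trans ?_
    filter_upwards [hchain.markov t fun q => h s q.1 q.2] with ω hω
    simp [hω]
  rw [hsplit]
  refine (condExp_finsetSum (f := fun s => δ s * fun ω => h s (At t ω) (St (t + 1) ω))
    (fun s _ => hchain.integrable_weight
      (fun s₀ a s' => (if s₀ = s then 1 else 0) * h s a s') t) _).trans ?_
  filter_upwards [ae_all_iff.2 hterm] with ω hω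
  rw [Finset.sum_apply, sum_congr rfl fun s _ => hω s]
  simp [δ, ite_mul]

theorem condExp_weight_mul (hchain : IsBehaviorChain p polb P St At) (g : S → A → S → ℝ)
    (v : S → ℝ) (t : ℕ) :
    P[fun ω => g (St t ω) (At t ω) (St (t + 1) ω) * v (St (t + 1) ω) | filtSA St At t] =ᵐ[P]
      fun ω => (weightedKernel p polb g *ᵥ v) (St t ω) := by
  filter_upwards [hchain.condExp_weight (fun s a s' => g s a s' * v s') t] with ω hω
  rw [hω, mulVec, dotProduct, sum_comm]
  simp [weightedKernel, sum_mul, mul_assoc]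

end FiniteMeasure

section ProbabilityMeasure

variable {S A Ω : Type*} [Fintype S] [DecidableEq S] [Fintype A] [MeasurableSpace S]
  [MeasurableSingletonClass S] [MeasurableSpace A] [MeasurableSingletonClass A]
  [MeasurableSpace Ω] {P : Measure Ω} [IsProbabilityMeasure P] {p : S → A → S → ℝ}
  {polb : S → A → ℝ} {St : ℕ → Ω → S} {At : ℕ → Ω → A}

theorem condExp_prod_weight (hchain : IsBehaviorChain p polb P St At) (g : S → A → S → ℝ)
    (k m : ℕ) :
    P[fun ω => ∏ j ∈ Ico k (k + m), g (St j ω) (At j ω) (St (j + 1) ω) | filtSA St At k] =ᵐ[P]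
      fun ω => (weightedKernel p polb g ^ m *ᵥ 1) (St k ω) := by
  induction m generalizing k with
  | zero =>
    simp [condExp_const (filtSA_le hchain.smeas hchain.ameas k)]
  | succ m ih =>
    set K := weightedKernel p polb g
    have hsplit : (fun ω => ∏ j ∈ Ico k (k + (m + 1)), g (St j ω) (At j ω) (St (j + 1) ω)) =
        (fun ω => g (St k ω) (At k ω) (St (k + 1) ω)) *
          fun ω => ∏ j ∈ Ico (k + 1) (k + 1 + m), g (St j ω) (At j ω) (St (j + 1) ω) := by
      ext ω
      rw [Pi.mul_apply, prod_eq_prod_Ico_succ_bot (by omega), show k + 1 + m = k + (m + 1) by omega]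
    have hfirst : StronglyMeasurable[filtSA St At (k + 1)]
        fun ω => g (St k ω) (At k ω) (St (k + 1) ω) :=
      (measurable_weight g (measurable_St_filtSA k.le_succ) (measurable_At_filtSA k.lt_succ_self)
        (measurable_St_filtSA le_rfl)).stronglyMeasurable
    have hpull : P[fun ω => ∏ j ∈ Ico k (k + (m + 1)), g (St j ω) (At j ω) (St (j + 1) ω) |
        filtSA St At (k + 1)] =ᵐ[P]
          fun ω => g (St k ω) (At k ω) (St (k + 1) ω) * (K ^ m *ᵥ 1) (St (k + 1) ω) := by
      rw [hsplit]
      refine (condExp_mul_of_stronglyMeasurable_left hfirst ?_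
        (hchain.integrable_prod_weight g _)).trans ?_
      · rw [← hsplit]; exact hchain.integrable_prod_weight g _
      · filter_upwards [ih (k + 1)] with ω hω
        rw [Pi.mul_apply, hω]
    calc P[fun ω => ∏ j ∈ Ico k (k + (m + 1)), g (St j ω) (At j ω) (St (j + 1) ω) |
          filtSA St At k]
        =ᵐ[P] P[P[fun ω => ∏ j ∈ Ico k (k + (m + 1)), g (St j ω) (At j ω) (St (j + 1) ω) |
          filtSA St At (k + 1)] | filtSA St At k] :=
          (condExp_condExp_of_le (filtSA_mono k.le_succ)
            (filtSA_le hchain.smeas hchain.ameas (k + 1))).symm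
      _ =ᵐ[P] P[fun ω => g (St k ω) (At k ω) (St (k + 1) ω) * (K ^ m *ᵥ 1) (St (k + 1) ω) |
          filtSA St At k] := condExp_congr_ae hpull
      _ =ᵐ[P] fun ω => (K *ᵥ (K ^ m *ᵥ 1)) (St k ω) := hchain.condExp_weight_mul g _ k
      _ = fun ω => (K ^ (m + 1) *ᵥ 1) (St k ω) := by simp [pow_succ', mulVec_mulVec]

theorem integral_prod_weight (hchain : IsBehaviorChain p polb P St At) (g : S → A → S → ℝ)
    (t : ℕ) :
    ∫ ω, ∏ j ∈ range t, g (St j ω) (At j ω) (St (j + 1) ω) ∂P =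
      ∫ ω, (weightedKernel p polb g ^ t *ᵥ 1) (St 0 ω) ∂P := by
  rw [← integral_condExp (filtSA_le hchain.smeas hchain.ameas 0)]
  have hce := hchain.condExp_prod_weight g 0 t
  rw [zero_add, ← range_eq_Ico] at hce
  exact integral_congr_ae hce

theorem ae_tendsto_prod_weight_zero (hchain : IsBehaviorChain p polb P St At)
    {g : S → A → S → ℝ} (hg : ∀ s a s', 0 ≤ g s a s')
    (hK0 : ∀ s s', 0 ≤ weightedKernel p polb g s s') (hK1 : weightedKernel p polb g *ᵥ 1 ≤ 1)
    (hinv : IsUnit (1 - weightedKernel p polb g)) :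
    ∀ᵐ ω ∂P, Tendsto (fun t => ∏ j ∈ range t, g (St j ω) (At j ω) (St (j + 1) ω)) atTop
      (𝓝 0) := by
  set K := weightedKernel p polb g
  refine ae_tendsto_zero_of_summable_integral_norm (fun t => hchain.integrable_prod_weight g _)
    (Summable.of_nonneg_of_le (fun t => integral_nonneg fun _ => norm_nonneg _) (fun t => ?_)
      (summable_sum (s := univ) fun s _ => summable_pow_mulVec_one hK0 hK1 hinv s))
  calc ∫ ω, ‖∏ j ∈ range t, g (St j ω) (At j ω) (St (j + 1) ω)‖ ∂P
      = ∫ ω, (K ^ t *ᵥ 1) (St 0 ω) ∂P := by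
        rw [← hchain.integral_prod_weight g t]
        exact integral_congr_ae (ae_of_all _ fun ω =>
          Real.norm_of_nonneg (prod_nonneg fun j _ => hg _ _ _))
    _ ≤ ∫ _, ∑ s, (K ^ t *ᵥ 1) s ∂P :=
        integral_mono_of_nonneg (ae_of_all _ fun ω => pow_mulVec_one_nonneg hK0 t _)
          (integrable_const _) (ae_of_all _ fun ω => single_le_sum
            (fun s _ => pow_mulVec_one_nonneg hK0 t s) (mem_univ _))
    _ = ∑ s, (K ^ t *ᵥ 1) s := by simp

end ProbabilityMeasure

end IsBehaviorChain

theorem stmt0_general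
    {S A : Type} [Fintype S] [Fintype A] [DecidableEq S]
    [MeasurableSpace S] [MeasurableSingletonClass S]
    [MeasurableSpace A] [MeasurableSingletonClass A]
    (p : S → A → S → ℝ) (pol polb : S → A → ℝ) (γf lamf ifun : S → ℝ)
    (hmodel : MDPModel p pol polb γf lamf ifun)
    (Ω : Type) [MeasurableSpace Ω] (P : Measure Ω) [IsProbabilityMeasure P]
    (St : ℕ → Ω → S) (At : ℕ → Ω → A)
    (hchain : IsBehaviorChain p polb P St At) :
    (∀ k t : ℕ, k < t →
      ((P[(fun ω => ∏ j ∈ Finset.Ico k t,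
            rho pol polb (St j ω) (At j ω) * γf (St (j + 1) ω)) | filtSA St At k]) =ᵐ[P]
          fun ω => ((Ppi p pol * Matrix.diagonal γf) ^ (t - k)).mulVec 1 (St k ω)) ∧
      (∀ᵐ ω ∂P, ((Ppi p pol * Matrix.diagonal γf) ^ (t - k)).mulVec 1 (St k ω) ≤ 1) ∧
      ((P[(fun ω => ∏ j ∈ Finset.Ico k t,
            rho pol polb (St j ω) (At j ω) * γf (St (j + 1) ω) * lamf (St (j + 1) ω)) |
              filtSA St At k]) =ᵐ[P]
          fun ω => ((Ppi p pol * Matrix.diagonal γf * Matrix.diagonal lamf) ^ (t - k)).mulVec 1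
            (St k ω)) ∧
      (∀ᵐ ω ∂P,
        ((Ppi p pol * Matrix.diagonal γf * Matrix.diagonal lamf) ^ (t - k)).mulVec 1 (St k ω)
          ≤ 1)) ∧
    (∀ᵐ ω ∂P, Tendsto (fun t => ∏ j ∈ Finset.range t,
        rho pol polb (St j ω) (At j ω) * γf (St (j + 1) ω)) atTop (nhds 0)) ∧
    (∀ᵐ ω ∂P, Tendsto (fun t => ∏ j ∈ Finset.range t,
        rho pol polb (St j ω) (At j ω) * γf (St (j + 1) ω) * lamf (St (j + 1) ω)) atTop
        (nhds 0)) := by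
  obtain ⟨hp0, hp1, hpol0, hpol1, hpolb0, -, hγ, hlam, -, hinv, -, hsupp⟩ := hmodel
  have hγ0 : 0 ≤ γf := fun s => (hγ s).1
  have hγlam0 : 0 ≤ γf * lamf := mul_nonneg hγ0 fun s => (hlam s).1
  have hγlam1 : γf * lamf ≤ 1 := fun s => mul_le_one₀ (hγ s).2 (hlam s).1 (hlam s).2
  have hρ0 (s : S) (a : A) : 0 ≤ rho pol polb s a := div_nonneg (hpol0 s a) (hpolb0 s a)
  have hKγ := weightedKernel_rho_mul (p := p) hpol0 hsupp γf
  have hKγlam : weightedKernel p polb (fun s a s' => rho pol polb s a * γf s' * lamf s') =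
      Ppi p pol * diagonal (γf * lamf) := by
    simp_rw [mul_assoc]
    exact weightedKernel_rho_mul hpol0 hsupp (γf * lamf)
  have hΓΛ : Ppi p pol * diagonal γf * diagonal lamf = Ppi p pol * diagonal (γf * lamf) := by
    rw [mul_assoc, diagonal_mul_diagonal]; rfl
  have hMγ0 := Ppi_mul_diagonal_nonneg hp0 hpol0 hγ0
  have hMγ1 := Ppi_mul_diagonal_mulVec_one_le_one hp0 hp1 hpol0 hpol1 fun s => (hγ s).2
  have hconv := hchain.ae_tendsto_prod_weight_zero (fun s a s' => mul_nonneg (hρ0 s a) (hγ0 s'))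
    (hKγ ▸ hMγ0) (hKγ ▸ hMγ1) (hKγ ▸ hinv)
  refine ⟨fun k t hkt => ?_, hconv, ?_⟩
  · obtain ⟨m, rfl⟩ := Nat.exists_eq_add_of_le hkt.le
    rw [Nat.add_sub_cancel_left, hΓΛ]
    exact ⟨hKγ ▸ hchain.condExp_prod_weight (fun s a s' => rho pol polb s a * γf s') k m,
      ae_of_all _ fun ω => pow_mulVec_one_le_one hMγ0 hMγ1 m _,
      hKγlam ▸ hchain.condExp_prod_weight
        (fun s a s' => rho pol polb s a * γf s' * lamf s') k m,
      ae_of_all _ fun ω => pow_mulVec_one_le_one (Ppi_mul_diagonal_nonneg hp0 hpol0 hγlam0)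
        (Ppi_mul_diagonal_mulVec_one_le_one hp0 hp1 hpol0 hpol1 hγlam1) m _⟩
  · filter_upwards [hconv] with ω hω
    have hw0 (j : ℕ) : 0 ≤ rho pol polb (St j ω) (At j ω) * γf (St (j + 1) ω) :=
      mul_nonneg (hρ0 _ _) (hγ0 _)
    have hwlam0 (j : ℕ) := mul_nonneg (hw0 j) (hlam (St (j + 1) ω)).1
    exact squeeze_zero (fun t => prod_nonneg fun j _ => hwlam0 j)
      (fun t => prod_le_prod (fun j _ => hwlam0 j)
        fun j _ => mul_le_of_le_one_right (hw0 j) (hlam _).2) hω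

/-- For all `0 ≤ k < t`, almost surely
`𝔼[ρ_k γ_{k+1} ⋯ ρ_{t−1} γ_t | F_k] = ((P_πΓ)^{t−k} 𝟙)(S_k) ≤ 1` and
`𝔼[β_{k+1} ⋯ β_t | F_k] = ((P_πΓΛ)^{t−k} 𝟙)(S_k) ≤ 1`; moreover the products
`∏_{k=1}^t (ρ_{k−1} γ_k)` and `∏_{k=1}^t β_k` converge to `0` almost surely. -/
theorem stmt0
    {S A : Type} [Fintype S] [Nonempty S] [Fintype A] [Nonempty A] [DecidableEq S]
    [MeasurableSpace S] [MeasurableSingletonClass S]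
    [MeasurableSpace A] [MeasurableSingletonClass A]
    (p : S → A → S → ℝ) (pol polb : S → A → ℝ) (γf lamf ifun : S → ℝ)
    (hmodel : MDPModel p pol polb γf lamf ifun)
    (Ω : Type) [MeasurableSpace Ω] (P : Measure Ω) [IsProbabilityMeasure P]
    (St : ℕ → Ω → S) (At : ℕ → Ω → A)
    (hchain : IsBehaviorChain p polb P St At) :
    (∀ k t : ℕ, k < t →
      ((P[(fun ω => ∏ j ∈ Finset.Ico k t,
            rho pol polb (St j ω) (At j ω) * γf (St (j + 1) ω)) | filtSA St At k]) =ᵐ[P]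
          fun ω => ((Ppi p pol * Matrix.diagonal γf) ^ (t - k)).mulVec 1 (St k ω)) ∧
      (∀ᵐ ω ∂P, ((Ppi p pol * Matrix.diagonal γf) ^ (t - k)).mulVec 1 (St k ω) ≤ 1) ∧
      ((P[(fun ω => ∏ j ∈ Finset.Ico k t,
            rho pol polb (St j ω) (At j ω) * γf (St (j + 1) ω) * lamf (St (j + 1) ω)) |
              filtSA St At k]) =ᵐ[P]
          fun ω => ((Ppi p pol * Matrix.diagonal γf * Matrix.diagonal lamf) ^ (t - k)).mulVec 1
            (St k ω)) ∧
      (∀ᵐ ω ∂P,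
        ((Ppi p pol * Matrix.diagonal γf * Matrix.diagonal lamf) ^ (t - k)).mulVec 1 (St k ω)
          ≤ 1)) ∧
    (∀ᵐ ω ∂P, Tendsto (fun t => ∏ j ∈ Finset.range t,
        rho pol polb (St j ω) (At j ω) * γf (St (j + 1) ω)) atTop (nhds 0)) ∧
    (∀ᵐ ω ∂P, Tendsto (fun t => ∏ j ∈ Finset.range t,
        rho pol polb (St j ω) (At j ω) * γf (St (j + 1) ω) * lamf (St (j + 1) ω)) atTop
        (nhds 0)) :=
  stmt0_general p pol polb γf lamf ifun hmodel Ω P St At hchain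
end

section
/- Let C be an n×n real matrix and c > 0 a constant with xᵀCx ≤ −c‖x‖₂² for all x ∈ ℝ^n, let b ∈ ℝ^n, and let θ* be the unique solution of Cθ + b = 0 (C is invertible under this hypothesis). Let r > ‖b‖₂/c and B = {θ ∈ ℝ^n : ‖θ‖₂ ≤ r}. Then: (i) ‖θ*‖₂ ≤ ‖b‖₂/c < r, so θ* lies in the interior of B; (ii) for every x with ‖x‖₂ = r, ⟨x, Cx + b⟩ < 0; and (iii) if x : ℝ → ℝ^n is differentiable with x'(t) = C x(t) + b and x(t) ∈ B for all t ∈ ℝ, then x(t) = θ* for all t ∈ ℝ. -/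
/-!
Write `A` for `x ↦ C x` on Euclidean space, so that `⟪v, A v⟫ ≤ -c‖v‖²`. Testing this at `θ*`,
where `A θ* = -b`, and at a point of the sphere of radius `r`, Cauchy–Schwarz gives (i) and (ii).
For (iii), `y = x - θ*` solves `y' = A y`, so `V = ‖y‖²` satisfies `V' ≤ -2c V`. Hence
`V t * exp (2 c t)` is antitone; it is at most `V s * exp (2 c s) ≤ M * exp (2 c s)` for every
`s ≤ t`, and letting `s → -∞` gives `V t ≤ 0`.
-/

open Filter Matrix Real RealInnerProductSpace WithLp Topology

section DifferentialInequality

variable {V V' : ℝ → ℝ} {k : ℝ}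

theorem antitone_mul_exp_of_hasDerivAt_le_neg_mul (hV : ∀ t, HasDerivAt V (V' t) t)
    (hV' : ∀ t, V' t ≤ -k * V t) : Antitone fun t => V t * exp (k * t) := by
  have hW : ∀ t, HasDerivAt (fun t => V t * exp (k * t))
      (exp (k * t) * (V' t + k * V t)) t := fun t =>
    ((hV t).fun_mul ((hasDerivAt_id' t).const_mul k).exp).congr_deriv (by ring)
  refine antitone_of_deriv_nonpos (fun t => (hW t).differentiableAt) fun t => ?_
  rw [(hW t).deriv]
  exact mul_nonpos_of_nonneg_of_nonpos (exp_pos _).le (by linarith [hV' t])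

theorem nonpos_of_hasDerivAt_le_neg_mul_of_le (hk : 0 < k) (hV : ∀ t, HasDerivAt V (V' t) t)
    (hV' : ∀ t, V' t ≤ -k * V t) {M : ℝ} (hM : ∀ t, V t ≤ M) (t : ℝ) : V t ≤ 0 := by
  have hlim : Tendsto (fun s => M * exp (k * s)) atBot (𝓝 0) := by
    simpa using ((tendsto_exp_atBot.comp (tendsto_id.const_mul_atBot hk)).const_mul M)
  have hWt : V t * exp (k * t) ≤ 0 := by
    refine ge_of_tendsto hlim ?_
    filter_upwards [eventually_le_atBot t] with s hs
    calc V t * exp (k * t) ≤ V s * exp (k * s) :=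
          antitone_mul_exp_of_hasDerivAt_le_neg_mul hV hV' hs
      _ ≤ M * exp (k * s) := mul_le_mul_of_nonneg_right (hM s) (exp_pos _).le
  exact nonpos_of_mul_nonpos_left hWt (exp_pos _)

end DifferentialInequality

section Dissipative

variable {E : Type*} [NormedAddCommGroup E] [InnerProductSpace ℝ E]

def IsStronglyDissipative (A : E → E) (c : ℝ) : Prop :=
  ∀ v, ⟪v, A v⟫ ≤ -c * ‖v‖ ^ 2

namespace IsStronglyDissipative

variable {A : E → E} {c : ℝ}

theorem norm_le_div (hA : IsStronglyDissipative A c) (hc : 0 < c) {θ b : E}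
    (hθ : A θ + b = 0) : ‖θ‖ ≤ ‖b‖ / c := by
  have hAθ : A θ = -b := eq_neg_of_add_eq_zero_left hθ
  have h : c * ‖θ‖ ^ 2 ≤ ‖θ‖ * ‖b‖ := by
    have := hA θ
    rw [hAθ, inner_neg_right] at this
    nlinarith [real_inner_le_norm θ b]
  rw [le_div_iff₀ hc]
  rcases (norm_nonneg θ).eq_or_lt with h0 | hpos
  · rw [← h0, zero_mul]; exact norm_nonneg b
  · nlinarith

theorem inner_add_neg (hA : IsStronglyDissipative A c) {x b : E} (hb : ‖b‖ < c * ‖x‖) :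
    ⟪x, A x + b⟫ < 0 := by
  have hx : 0 < ‖x‖ :=
    (norm_nonneg x).lt_of_ne' fun h => by simp [h, (norm_nonneg b).not_gt] at hb
  calc ⟪x, A x + b⟫ = ⟪x, A x⟫ + ⟪x, b⟫ := inner_add_right _ _ _
    _ ≤ -c * ‖x‖ ^ 2 + ‖x‖ * ‖b‖ := add_le_add (hA x) (real_inner_le_norm x b)
    _ = ‖x‖ * (‖b‖ - c * ‖x‖) := by ring
    _ < 0 := mul_neg_of_pos_of_neg hx (by linarith)

theorem eq_zero_of_hasDerivAt_of_norm_le (hA : IsStronglyDissipative A c) (hc : 0 < c)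
    {y : ℝ → E} (hy : ∀ t, HasDerivAt y (A (y t)) t) {M : ℝ} (hM : ∀ t, ‖y t‖ ≤ M) (t : ℝ) :
    y t = 0 := by
  have hV' : ∀ t, 2 * ⟪y t, A (y t)⟫ ≤ -(2 * c) * ‖y t‖ ^ 2 := fun t => by linarith [hA (y t)]
  have hbound : ∀ t, ‖y t‖ ^ 2 ≤ M ^ 2 := fun t => pow_le_pow_left₀ (norm_nonneg _) (hM t) 2
  simpa using
    nonpos_of_hasDerivAt_le_neg_mul_of_le (by positivity) (fun t => (hy t).norm_sq) hV' hbound t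

theorem eq_of_hasDerivAt_add_of_norm_le {A : E →ₗ[ℝ] E} (hA : IsStronglyDissipative A c)
    (hc : 0 < c) {θ b : E} (hθ : A θ + b = 0) {x : ℝ → E} (hx : ∀ t, HasDerivAt x (A (x t) + b) t)
    {M : ℝ} (hM : ∀ t, ‖x t‖ ≤ M) (t : ℝ) : x t = θ := by
  have hy : ∀ t, HasDerivAt (fun s => x s - θ) (A (x t - θ)) t := fun t => by
    rw [map_sub, eq_neg_of_add_eq_zero_left hθ, sub_neg_eq_add]
    exact (hx t).sub_const θ
  have hMy : ∀ t, ‖x t - θ‖ ≤ M + ‖θ‖ := fun t => (norm_sub_le _ _).trans (by linarith [hM t])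
  exact sub_eq_zero.1 (hA.eq_zero_of_hasDerivAt_of_norm_le hc hy hMy t)

end IsStronglyDissipative

end Dissipative

section EuclideanSpace

variable {ι : Type*} [Fintype ι]

theorem dotProduct_eq_inner_toLp (x y : ι → ℝ) : x ⬝ᵥ y = ⟪toLp 2 x, toLp 2 y⟫ := by
  rw [EuclideanSpace.inner_toLp_toLp, star_trivial, dotProduct_comm]

theorem sqrt_dotProduct_self_eq_norm_toLp (x : ι → ℝ) : √(x ⬝ᵥ x) = ‖toLp 2 x‖ := by
  rw [dotProduct_eq_inner_toLp, ← norm_eq_sqrt_real_inner]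

theorem HasDerivAt.toLp {x : ℝ → ι → ℝ} {v : ι → ℝ} {t : ℝ} (h : HasDerivAt x v t) :
    HasDerivAt (fun s => toLp 2 (x s)) (toLp 2 v) t :=
  (PiLp.continuousLinearEquiv 2 ℝ _).symm.hasFDerivAt.comp_hasDerivAt t h

theorem isStronglyDissipative_toLpLin [DecidableEq ι] {C : Matrix ι ι ℝ} {c : ℝ}
    (hC : ∀ x : ι → ℝ, x ⬝ᵥ C *ᵥ x ≤ -c * (x ⬝ᵥ x)) :
    IsStronglyDissipative (toLpLin 2 2 C) c := fun v => by
  simpa [toLpLin_apply, dotProduct_eq_inner_toLp, real_inner_self_eq_norm_sq] using hC (ofLp v)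

end EuclideanSpace

theorem stmt11_general (n : ℕ)
    (C : Matrix (Fin n) (Fin n) ℝ) (b : Fin n → ℝ) (c : ℝ) (hc : 0 < c)
    (hC : ∀ x : Fin n → ℝ, x ⬝ᵥ C.mulVec x ≤ -c * (x ⬝ᵥ x))
    (θs : Fin n → ℝ) (hθ : C.mulVec θs + b = 0)
    (r : ℝ) (hr : Real.sqrt (b ⬝ᵥ b) / c < r) :
    (Real.sqrt (θs ⬝ᵥ θs) ≤ Real.sqrt (b ⬝ᵥ b) / c ∧ Real.sqrt (b ⬝ᵥ b) / c < r) ∧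
    (∀ x : Fin n → ℝ, Real.sqrt (x ⬝ᵥ x) = r → x ⬝ᵥ (C.mulVec x + b) < 0) ∧
    (∀ x : ℝ → Fin n → ℝ,
      (∀ t : ℝ, HasDerivAt x (C.mulVec (x t) + b) t) →
      (∀ t : ℝ, Real.sqrt (x t ⬝ᵥ x t) ≤ r) →
      ∀ t : ℝ, x t = θs) := by
  have hA := isStronglyDissipative_toLpLin hC
  have hAθ : toLpLin 2 2 C (toLp 2 θs) + toLp 2 b = 0 := by
    rw [toLpLin_apply, ← toLp_add, hθ, toLp_zero]
  simp only [sqrt_dotProduct_self_eq_norm_toLp] at hr ⊢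
  have hbr : ‖toLp 2 b‖ < c * r := (div_lt_iff₀' hc).1 hr
  refine ⟨⟨hA.norm_le_div hc hAθ, hr⟩, fun x hx => ?_, fun x hx hball t => ?_⟩
  · rw [dotProduct_eq_inner_toLp, toLp_add]
    exact hA.inner_add_neg (hx ▸ hbr)
  · refine toLp_injective 2 (hA.eq_of_hasDerivAt_add_of_norm_le hc hAθ (fun s => ?_) hball t)
    simpa [toLpLin_apply] using (hx s).toLp

/-- If `xᵀCx ≤ −c‖x‖₂²` and `Cθ* + b = 0`, `r > ‖b‖₂/c`, then:
(i) `‖θ*‖₂ ≤ ‖b‖₂/c < r`; (ii) for every `x` with `‖x‖₂ = r`, `⟨x, Cx + b⟩ < 0`;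
(iii) any solution of `x' = Cx + b` staying in the ball of radius `r` is
identically `θ*`. -/
theorem stmt11 (n : ℕ) (hn : 1 ≤ n)
    (C : Matrix (Fin n) (Fin n) ℝ) (b : Fin n → ℝ) (c : ℝ) (hc : 0 < c)
    (hC : ∀ x : Fin n → ℝ, x ⬝ᵥ C.mulVec x ≤ -c * (x ⬝ᵥ x))
    (θs : Fin n → ℝ) (hθ : C.mulVec θs + b = 0)
    (r : ℝ) (hr : Real.sqrt (b ⬝ᵥ b) / c < r) :
    (Real.sqrt (θs ⬝ᵥ θs) ≤ Real.sqrt (b ⬝ᵥ b) / c ∧ Real.sqrt (b ⬝ᵥ b) / c < r) ∧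
    (∀ x : Fin n → ℝ, Real.sqrt (x ⬝ᵥ x) = r → x ⬝ᵥ (C.mulVec x + b) < 0) ∧
    (∀ x : ℝ → Fin n → ℝ,
      (∀ t : ℝ, HasDerivAt x (C.mulVec (x t) + b) t) →
      (∀ t : ℝ, Real.sqrt (x t ⬝ᵥ x t) ≤ r) →
      ∀ t : ℝ, x t = θs) :=
  stmt11_general n C b c hc hC θs hθ r hr
end

section
/- The matrix C = −ΦᵀM̄(I−Q)Φ is negative semidefinite: yᵀCy ≤ 0 for all y ∈ ℝ^n. If moreover i(s) > 0 for all s ∈ S, then C is negative definite: there exists c > 0 such that yᵀCy ≤ −c‖y‖₂² for all y ∈ ℝ^n. -/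
open Matrix

noncomputable section

/-- `Q = I − (I−PΓΛ)⁻¹(I−PΓ)`. -/
def Qof {S : Type*} [Fintype S] [DecidableEq S]
    (P : Matrix S S ℝ) (γf lamf : S → ℝ) : Matrix S S ℝ :=
  1 - (1 - P * Matrix.diagonal γf * Matrix.diagonal lamf)⁻¹ * (1 - P * Matrix.diagonal γf)

/-- The diagonal vector of `M̄`: `(d_i)ᵀ(I−Q)⁻¹`, with `d_i(s) = d(s)·i(s)`. -/
def MdiagOf {S : Type*} [Fintype S] [DecidableEq S]
    (P : Matrix S S ℝ) (γf lamf d ifun : S → ℝ) : S → ℝ :=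
  Matrix.vecMul (fun s => d s * ifun s) (1 - Qof P γf lamf)⁻¹

/-- `C = −ΦᵀM̄(I−Q)Φ`. -/
def Cof {S : Type*} [Fintype S] [DecidableEq S] {n : ℕ}
    (P : Matrix S S ℝ) (γf lamf d ifun : S → ℝ)
    (Φ : Matrix S (Fin n) ℝ) : Matrix (Fin n) (Fin n) ℝ :=
  -(Φ.transpose * Matrix.diagonal (MdiagOf P γf lamf d ifun) * (1 - Qof P γf lamf) * Φ)

end

/-!
Since `I - PΓ = (I - PΓΛ) - PΓ(I - Λ)`, we have `Q = (I - PΓΛ)⁻¹ PΓ(I - Λ)`. For a substochastic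
`M` (nonnegative, row sums `≤ 1`) with `I - M` invertible, `(I - M)⁻¹` is entrywise nonnegative:
for row sums `< 1` by the Neumann series, in general by letting `t → 1⁻` in `(I - tM)⁻¹`.
Applied to `M = PΓΛ` this makes `Q` substochastic, and applied to `M = Q` it makes the diagonal
`m = d_iᵀ(I - Q)⁻¹` of `M̄` nonnegative, with `mᵀ(I - Q) = d_iᵀ`. For every `x`,
`2 xᵀ diag(m) (I - Q) x - ∑ₛ d_i(s) xₛ² = ∑ₛ mₛ (1 - ∑ₜ Qₛₜ) xₛ² + ∑ₛₜ mₛ Qₛₜ (xₛ - xₜ)² ≥ 0`,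
so `yᵀCy ≤ -½ ∑ₛ d_i(s) (Φy)ₛ²`; when `i > 0` this is at most `-c ‖y‖²` because `Φ` is injective.
-/

section Substochastic

variable {ι : Type*} [Fintype ι] [DecidableEq ι]

structure IsSubstochastic (M : Matrix ι ι ℝ) : Prop where
  nonneg : ∀ i j, 0 ≤ M i j
  sum_row_le_one : ∀ i, ∑ j, M i j ≤ 1

lemma IsSubstochastic.mul_diagonal {M : Matrix ι ι ℝ} (hM : IsSubstochastic M) {w : ι → ℝ}
    (hw : ∀ j, w j ∈ Set.Icc (0 : ℝ) 1) : IsSubstochastic (M * diagonal w) where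
  nonneg i j := by
    rw [Matrix.mul_diagonal]
    exact mul_nonneg (hM.nonneg i j) (hw j).1
  sum_row_le_one i := by
    simp only [Matrix.mul_diagonal]
    exact (Finset.sum_le_sum fun j _ => mul_le_of_le_one_right (hM.nonneg i j) (hw j).2).trans
      (hM.sum_row_le_one i)

section Neumann

attribute [local instance] Matrix.linftyOpNormedRing Matrix.linftyOpNormedAlgebra

lemma inv_one_sub_apply_nonneg_of_sum_row_lt_one {M : Matrix ι ι ℝ} (hM : ∀ i j, 0 ≤ M i j)
    (hrow : ∀ i, ∑ j, M i j < 1) (i j : ι) : 0 ≤ (1 - M)⁻¹ i j := by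
  have : CompleteSpace (Matrix ι ι ℝ) := FiniteDimensional.complete ℝ _
  have hnorm : ‖M‖₊ < 1 := by
    rw [linfty_opNNNorm_def, Finset.sup_lt_iff one_pos]
    intro i _
    rw [← NNReal.coe_lt_coe]
    push_cast
    simpa only [Real.norm_of_nonneg (hM i _)] using hrow i
  have hsum := Pi.hasSum.mp (Pi.hasSum.mp (hasSum_geom_series_inverse M hnorm) i) j
  rw [nonsing_inv_eq_ringInverse]
  exact hsum.nonneg fun k => pow_apply_nonneg hM k i j

end Neumann

lemma IsSubstochastic.inv_one_sub_apply_nonneg {M : Matrix ι ι ℝ} (hM : IsSubstochastic M)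
    (hU : IsUnit (1 - M)) (i j : ι) : 0 ≤ (1 - M)⁻¹ i j := by
  have hinv : ContinuousAt Inv.inv (1 - (1 : ℝ) • M) := by
    refine continuousAt_matrix_inv _ ?_
    rw [one_smul]
    exact NormedRing.inverse_continuousAt ((isUnit_iff_isUnit_det _).mp hU).unit
  have hcont : ContinuousAt (fun t : ℝ => (1 - t • M)⁻¹ i j) 1 :=
    (continuous_apply_apply i j).continuousAt.comp (f := fun t : ℝ => (1 - t • M)⁻¹)
      (hinv.comp (f := fun t : ℝ => 1 - t • M) (by fun_prop))
  have hlim := hcont.tendsto.mono_left (nhdsWithin_le_nhds (s := Set.Iio 1))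
  rw [one_smul] at hlim
  refine ge_of_tendsto hlim (Filter.eventually_of_mem (Ioo_mem_nhdsLT one_pos) fun t ht => ?_)
  refine inv_one_sub_apply_nonneg_of_sum_row_lt_one (fun a b => ?_) (fun a => ?_) i j
  · exact mul_nonneg ht.1.le (hM.nonneg a b)
  · simp only [Matrix.smul_apply, smul_eq_mul, ← Finset.mul_sum]
    exact (mul_le_of_le_one_right ht.1.le (hM.sum_row_le_one a)).trans_lt ht.2

lemma IsSubstochastic.sum_vecMul_mul_sq_le {N : Matrix ι ι ℝ} (hN : IsSubstochastic N)
    {m : ι → ℝ} (hm : ∀ i, 0 ≤ m i) (x : ι → ℝ) :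
    ∑ i, vecMul m (1 - N) i * x i ^ 2 ≤ 2 * (x ⬝ᵥ (diagonal m * (1 - N)) *ᵥ x) := by
  have hquad : x ⬝ᵥ (diagonal m * (1 - N)) *ᵥ x
      = ∑ i, m i * x i ^ 2 - ∑ i, ∑ j, m i * N i j * (x i * x j) := by
    rw [← mulVec_mulVec, sub_mulVec, one_mulVec, dotProduct, ← Finset.sum_sub_distrib]
    refine Finset.sum_congr rfl fun i _ => ?_
    have hcross : ∑ j, m i * N i j * (x i * x j) = m i * x i * (N *ᵥ x) i := by
      simp only [mulVec, dotProduct, Finset.mul_sum]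
      exact Finset.sum_congr rfl fun j _ => by ring
    rw [mulVec_diagonal, Pi.sub_apply, hcross]
    ring
  have hweight : ∑ i, vecMul m (1 - N) i * x i ^ 2
      = ∑ i, m i * x i ^ 2 - ∑ i, ∑ j, m i * N i j * x j ^ 2 := by
    rw [Finset.sum_comm (f := fun i j => m i * N i j * x j ^ 2), vecMul_sub, vecMul_one]
    simp only [Pi.sub_apply, sub_mul, Finset.sum_sub_distrib, vecMul, dotProduct, Finset.sum_mul]
  have hrow : ∑ i, ∑ j, m i * N i j * x i ^ 2 ≤ ∑ i, m i * x i ^ 2 := by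
    refine Finset.sum_le_sum fun i _ => ?_
    rw [← Finset.sum_mul, ← Finset.mul_sum]
    exact (mul_le_of_le_one_right (mul_nonneg (hm i) (sq_nonneg _)) (hN.sum_row_le_one i)).trans_eq'
      (by ring)
  have hamgm : 2 * ∑ i, ∑ j, m i * N i j * (x i * x j)
      ≤ ∑ i, ∑ j, m i * N i j * x i ^ 2 + ∑ i, ∑ j, m i * N i j * x j ^ 2 := by
    simp only [Finset.mul_sum, ← Finset.sum_add_distrib]
    refine Finset.sum_le_sum fun i _ => Finset.sum_le_sum fun j _ => ?_
    nlinarith [mul_nonneg (mul_nonneg (hm i) (hN.nonneg i j)) (sq_nonneg (x i - x j))]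
  linarith

end Substochastic

lemma exists_pos_mul_dotProduct_self_le {m n : Type*} [Fintype m] [Fintype n] [DecidableEq n]
    {Φ : Matrix m n ℝ} (hΦ : LinearIndependent ℝ Φ.col) :
    ∃ c > 0, ∀ y, c * (y ⬝ᵥ y) ≤ Φ *ᵥ y ⬝ᵥ Φ *ᵥ y := by
  have hker : LinearMap.ker (toLpLin 2 2 Φ) = ⊥ := LinearMap.ker_eq_bot.mpr fun _ _ h =>
    PiLp.ext (congrFun (mulVec_injective_iff.mpr hΦ (congrArg WithLp.ofLp h)))
  obtain ⟨K, hK, hanti⟩ := (toLpLin 2 2 Φ).exists_antilipschitzWith hker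
  refine ⟨((K : ℝ) ^ 2)⁻¹, by positivity, fun y => ?_⟩
  have hy := pow_le_pow_left₀ (norm_nonneg _)
    (hanti.le_mul_norm (map_zero _) (WithLp.toLp 2 y)) 2
  rw [mul_pow, ← real_inner_self_eq_norm_sq, ← real_inner_self_eq_norm_sq] at hy
  rwa [inv_mul_le_iff₀ (by positivity)]

lemma exists_pos_le_of_forall_pos {ι : Type*} [Finite ι] {w : ι → ℝ} (hw : ∀ i, 0 < w i) :
    ∃ δ > 0, ∀ i, δ ≤ w i := by
  cases isEmpty_or_nonempty ι
  · exact ⟨1, one_pos, isEmptyElim⟩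
  · obtain ⟨i₀, hi₀⟩ := Finite.exists_min w
    exact ⟨w i₀, hw i₀, hi₀⟩

lemma dotProduct_transpose_mul_mul_mulVec {m n : Type*} [Fintype m] [Fintype n]
    (Φ : Matrix m n ℝ) (A : Matrix m m ℝ) (y : n → ℝ) :
    y ⬝ᵥ (Φᵀ * A * Φ) *ᵥ y = Φ *ᵥ y ⬝ᵥ A *ᵥ (Φ *ᵥ y) := by
  rw [← mulVec_mulVec, ← mulVec_mulVec, dotProduct_mulVec, vecMul_transpose]

section

variable {S : Type*} [Fintype S] [DecidableEq S] {P : Matrix S S ℝ} {γf lamf : S → ℝ}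

lemma Qof_eq_inv_mul (h2 : IsUnit (1 - P * diagonal γf * diagonal lamf)) :
    Qof P γf lamf =
      (1 - P * diagonal γf * diagonal lamf)⁻¹ * (P * diagonal γf * (1 - diagonal lamf)) := by
  have hsplit : 1 - P * diagonal γf
      = (1 - P * diagonal γf * diagonal lamf) - P * diagonal γf * (1 - diagonal lamf) := by
    noncomm_ring
  rw [Qof, hsplit, Matrix.mul_sub, nonsing_inv_mul _ ((isUnit_iff_isUnit_det _).mp h2),
    sub_sub_cancel]

lemma isUnit_one_sub_Qof (h1 : IsUnit (1 - P * diagonal γf))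
    (h2 : IsUnit (1 - P * diagonal γf * diagonal lamf)) : IsUnit (1 - Qof P γf lamf) := by
  rw [Qof, sub_sub_cancel]
  exact (isUnit_nonsing_inv_iff.mpr h2).mul h1

lemma isSubstochastic_Qof (hP : IsSubstochastic P) (hγ : ∀ s, γf s ∈ Set.Icc (0 : ℝ) 1)
    (hlam : ∀ s, lamf s ∈ Set.Icc (0 : ℝ) 1) (h2 : IsUnit (1 - P * diagonal γf * diagonal lamf)) :
    IsSubstochastic (Qof P γf lamf) := by
  have hPγ := hP.mul_diagonal hγ
  have hAinv := (hPγ.mul_diagonal hlam).inv_one_sub_apply_nonneg h2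
  have hD : IsSubstochastic (P * diagonal γf * diagonal (1 - lamf)) :=
    hPγ.mul_diagonal fun s => ⟨sub_nonneg.2 (hlam s).2, sub_le_self _ (hlam s).1⟩
  have hB : ∀ k, 0 ≤ ((1 - P * diagonal γf) *ᵥ 1) k := fun k => by
    simpa [sub_mulVec, mulVec, dotProduct, one_apply] using hPγ.sum_row_le_one k
  refine ⟨fun i j => ?_, fun i => ?_⟩
  · have hΛ : (1 : Matrix S S ℝ) - diagonal lamf = diagonal (1 - lamf) := by
      rw [← diagonal_one, diagonal_sub]
      rfl
    rw [Qof_eq_inv_mul h2, hΛ, mul_apply]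
    exact Finset.sum_nonneg fun k _ => mul_nonneg (hAinv i k) (hD.nonneg k j)
  · have hrow : ((1 - Qof P γf lamf) *ᵥ 1) i
        = ∑ k, (1 - P * diagonal γf * diagonal lamf)⁻¹ i k * ((1 - P * diagonal γf) *ᵥ 1) k := by
      rw [Qof, sub_sub_cancel, ← mulVec_mulVec]
      rfl
    have hnonneg : 0 ≤ ((1 - Qof P γf lamf) *ᵥ 1) i :=
      hrow ▸ Finset.sum_nonneg fun k _ => mul_nonneg (hAinv i k) (hB k)
    simpa [sub_mulVec, mulVec, dotProduct, one_apply] using hnonneg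

lemma sum_mul_sq_le_neg_two_mul_dotProduct_Cof (hP : IsSubstochastic P)
    (hγ : ∀ s, γf s ∈ Set.Icc (0 : ℝ) 1) (hlam : ∀ s, lamf s ∈ Set.Icc (0 : ℝ) 1)
    (h1 : IsUnit (1 - P * diagonal γf)) (h2 : IsUnit (1 - P * diagonal γf * diagonal lamf))
    {d ifun : S → ℝ} (hdi : ∀ s, 0 ≤ d s * ifun s) {n : ℕ} (Φ : Matrix S (Fin n) ℝ)
    (y : Fin n → ℝ) :
    ∑ s, d s * ifun s * (Φ *ᵥ y) s ^ 2 ≤ -2 * (y ⬝ᵥ Cof P γf lamf d ifun Φ *ᵥ y) := by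
  have hQ := isSubstochastic_Qof hP hγ hlam h2
  have hU := isUnit_one_sub_Qof h1 h2
  have hm : ∀ s, 0 ≤ MdiagOf P γf lamf d ifun s := fun s =>
    Finset.sum_nonneg fun k _ => mul_nonneg (hdi k) (hQ.inv_one_sub_apply_nonneg hU k s)
  have hw : vecMul (MdiagOf P γf lamf d ifun) (1 - Qof P γf lamf) = fun s => d s * ifun s := by
    rw [MdiagOf, vecMul_vecMul, nonsing_inv_mul _ ((isUnit_iff_isUnit_det _).mp hU), vecMul_one]
  have hbound := hQ.sum_vecMul_mul_sq_le hm (Φ *ᵥ y)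
  rw [hw] at hbound
  rw [Cof, neg_mulVec, dotProduct_neg, Matrix.mul_assoc Φᵀ, dotProduct_transpose_mul_mul_mulVec]
  linarith

end

theorem stmt15_general {S : Type} [Fintype S] [DecidableEq S] (n : ℕ)
    (P : Matrix S S ℝ) (hP0 : ∀ s s', 0 ≤ P s s') (hP1 : ∀ s, ∑ s', P s s' = 1)
    (γf lamf : S → ℝ)
    (hγ : ∀ s, γf s ∈ Set.Icc (0 : ℝ) 1) (hlam : ∀ s, lamf s ∈ Set.Icc (0 : ℝ) 1)
    (h1 : IsUnit (1 - P * Matrix.diagonal γf))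
    (h2 : IsUnit (1 - P * Matrix.diagonal γf * Matrix.diagonal lamf))
    (d ifun : S → ℝ) (hd : ∀ s, 0 < d s) (hi : ∀ s, 0 ≤ ifun s)
    (Φ : Matrix S (Fin n) ℝ)
    (hΦ : LinearIndependent ℝ fun j : Fin n => fun s : S => Φ s j) :
    (∀ y : Fin n → ℝ, y ⬝ᵥ (Cof P γf lamf d ifun Φ).mulVec y ≤ 0) ∧
    ((∀ s, 0 < ifun s) → ∃ c : ℝ, 0 < c ∧
      ∀ y : Fin n → ℝ, y ⬝ᵥ (Cof P γf lamf d ifun Φ).mulVec y ≤ -c * (y ⬝ᵥ y)) := by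
  have hdi : ∀ s, 0 ≤ d s * ifun s := fun s => mul_nonneg (hd s).le (hi s)
  have key := sum_mul_sq_le_neg_two_mul_dotProduct_Cof ⟨hP0, fun s => (hP1 s).le⟩ hγ hlam h1 h2
    hdi Φ
  refine ⟨fun y => ?_, fun hipos => ?_⟩
  · have hsum : 0 ≤ ∑ s, d s * ifun s * (Φ *ᵥ y) s ^ 2 :=
      Finset.sum_nonneg fun s _ => mul_nonneg (hdi s) (sq_nonneg _)
    linarith [key y]
  · obtain ⟨δ, hδ, hδle⟩ := exists_pos_le_of_forall_pos fun s => mul_pos (hd s) (hipos s)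
    obtain ⟨c, hc, hcΦ⟩ := exists_pos_mul_dotProduct_self_le (Φ := Φ) hΦ
    refine ⟨δ * c / 2, by positivity, fun y => ?_⟩
    have hweighted : δ * (Φ *ᵥ y ⬝ᵥ Φ *ᵥ y) ≤ ∑ s, d s * ifun s * (Φ *ᵥ y) s ^ 2 := by
      rw [dotProduct, Finset.mul_sum]
      refine Finset.sum_le_sum fun s _ => ?_
      rw [sq, ← mul_assoc, mul_assoc δ]
      exact mul_le_mul_of_nonneg_right (hδle s) (mul_self_nonneg _)
    linarith [key y, mul_le_mul_of_nonneg_left (hcΦ y) hδ.le]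

/-- `C = −ΦᵀM̄(I−Q)Φ` is negative semidefinite; if `i(s) > 0`
for all `s`, then `C` is negative definite. -/
theorem stmt15 {S : Type} [Fintype S] [Nonempty S] [DecidableEq S] (n : ℕ) (hn : 1 ≤ n)
    (P : Matrix S S ℝ) (hP0 : ∀ s s', 0 ≤ P s s') (hP1 : ∀ s, ∑ s', P s s' = 1)
    (γf lamf : S → ℝ)
    (hγ : ∀ s, γf s ∈ Set.Icc (0 : ℝ) 1) (hlam : ∀ s, lamf s ∈ Set.Icc (0 : ℝ) 1)
    (h1 : IsUnit (1 - P * Matrix.diagonal γf))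
    (h2 : IsUnit (1 - P * Matrix.diagonal γf * Matrix.diagonal lamf))
    (d ifun : S → ℝ) (hd : ∀ s, 0 < d s) (hi : ∀ s, 0 ≤ ifun s)
    (Φ : Matrix S (Fin n) ℝ)
    (hΦ : LinearIndependent ℝ fun j : Fin n => fun s : S => Φ s j) :
    (∀ y : Fin n → ℝ, y ⬝ᵥ (Cof P γf lamf d ifun Φ).mulVec y ≤ 0) ∧
    ((∀ s, 0 < ifun s) → ∃ c : ℝ, 0 < c ∧
      ∀ y : Fin n → ℝ, y ⬝ᵥ (Cof P γf lamf d ifun Φ).mulVec y ≤ -c * (y ⬝ᵥ y)) :=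
  stmt15_general n P hP0 hP1 γf lamf hγ hlam h1 h2 d ifun hd hi Φ hΦ
end

section
/- Let J = {s ∈ S : i(s) = 0} and let E ⊆ ℝ^S be the column space of Φ. Suppose that every v ∈ E with v(s) = 0 for all s ∉ J is the zero vector. Then the matrix C = −ΦᵀM̄(I−Q)Φ is negative definite: there exists c > 0 such that yᵀCy ≤ −c‖y‖₂² for all y ∈ ℝ^n. -/
open Matrix

section Stmt17Aux
attribute [local instance] Matrix.linftyOpNormedRing Matrix.linftyOpNormedAlgebra

variable {S : Type} [Fintype S] [DecidableEq S]


-- entries of powers nonneg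
lemma stmt17_aux_pow_entry_nonneg (M : Matrix S S ℝ) (hM : ∀ i j, 0 ≤ M i j) (k : ℕ) :
    ∀ i j, 0 ≤ (M ^ k) i j := by
  induction k with
  | zero => intro i j; by_cases h : i = j <;> simp [pow_zero, Matrix.one_apply, h]
  | succ k ih =>
    intro i j
    rw [pow_succ, Matrix.mul_apply]
    exact Finset.sum_nonneg fun l _ => mul_nonneg (ih i l) (hM l j)

lemma stmt17_aux_norm_le_one (M : Matrix S S ℝ) (hM : ∀ i j, 0 ≤ M i j) (hrow : ∀ i, ∑ j, M i j ≤ 1) :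
    ‖M‖ ≤ 1 := by
  rw [Matrix.linfty_opNorm_def]
  have : (Finset.univ.sup fun i => ∑ j : S, ‖M i j‖₊) ≤ 1 := by
    apply Finset.sup_le
    intro i _
    have : ((∑ j : S, ‖M i j‖₊ : NNReal) : ℝ) ≤ 1 := by
      push_cast
      calc (∑ j : S, (‖M i j‖₊ : ℝ)) = ∑ j, M i j := by
            apply Finset.sum_congr rfl; intro j _
            simp [Real.norm_eq_abs, abs_of_nonneg (hM i j)]
        _ ≤ 1 := hrow i
    exact_mod_cast this
  exact_mod_cast this

lemma stmt17_aux_inv_one_sub_smul_nonneg (M : Matrix S S ℝ) (hM : ∀ i j, 0 ≤ M i j)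
    (hrow : ∀ i, ∑ j, M i j ≤ 1) {t : ℝ} (ht0 : 0 ≤ t) (ht1 : t < 1) :
    ∀ i j, 0 ≤ (1 - t • M)⁻¹ i j := by
  intro i j
  have hnorm : ‖t • M‖ < 1 := by
    rw [norm_smul]
    calc ‖t‖ * ‖M‖ ≤ ‖t‖ * 1 := by
          apply mul_le_mul_of_nonneg_left (stmt17_aux_norm_le_one M hM hrow) (norm_nonneg t)
      _ = |t| := by simp [Real.norm_eq_abs]
      _ < 1 := by rwa [abs_of_nonneg ht0]
  rw [Matrix.nonsing_inv_eq_ringInverse, NormedRing.inverse_one_sub _ hnorm]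
  have hval : (((Units.oneSub (t • M) hnorm)⁻¹ : (Matrix S S ℝ)ˣ) : Matrix S S ℝ) = ∑' n : ℕ, (t • M) ^ n := rfl
  rw [hval]
  -- entry of tsum
  let E : Matrix S S ℝ →ₗ[ℝ] ℝ :=
    { toFun := fun A => A i j
      map_add' := fun A B => rfl
      map_smul' := fun c A => rfl }
  let Ec := LinearMap.toContinuousLinearMap E
  have hsum : Summable fun n : ℕ => (t • M) ^ n := summable_geometric_of_norm_lt_one hnorm
  have := Ec.map_tsum hsum
  have hEc : ∀ A, Ec A = A i j := fun A => rfl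
  calc (0:ℝ) ≤ ∑' n : ℕ, ((t • M) ^ n) i j := by
        apply tsum_nonneg
        intro k
        exact stmt17_aux_pow_entry_nonneg (t • M) (fun a b => by
          simp only [Matrix.smul_apply, smul_eq_mul]; exact mul_nonneg ht0 (hM a b)) k i j
    _ = (∑' n : ℕ, (t • M) ^ n) i j := by
        have := (this.symm : ∑' (z : ℕ), Ec ((t • M) ^ z) = Ec (∑' (z : ℕ), (t • M) ^ z))
        simpa [hEc] using this

lemma stmt17_aux_inv_one_sub_nonneg (M : Matrix S S ℝ) (hM : ∀ i j, 0 ≤ M i j)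
    (hrow : ∀ i, ∑ j, M i j ≤ 1) (hu : IsUnit (1 - M)) :
    ∀ i j, 0 ≤ (1 - M)⁻¹ i j := by
  intro i j
  have hdet : (1 - M).det ≠ 0 := by
    have := (Matrix.isUnit_iff_isUnit_det _).mp hu
    exact this.ne_zero
  -- limit filter
  have hne : (nhdsWithin (1:ℝ) (Set.Ico (0:ℝ) 1)).NeBot := by
    rw [← mem_closure_iff_nhdsWithin_neBot, closure_Ico (by norm_num : (0:ℝ) ≠ 1)]
    exact Set.right_mem_Icc.mpr (by norm_num)
  -- the (t,i,j)-entry function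
  have key : Filter.Tendsto (fun t : ℝ => (1 - t • M)⁻¹ i j)
      (nhdsWithin (1:ℝ) (Set.Ico (0:ℝ) 1)) (nhds ((1 - M)⁻¹ i j)) := by
    have hA : Continuous fun t : ℝ => (1 : Matrix S S ℝ) - t • M := by
      exact (continuous_const.sub (continuous_id.smul continuous_const))
    have hdetc : Filter.Tendsto (fun t : ℝ => (1 - t • M).det)
        (nhdsWithin (1:ℝ) (Set.Ico (0:ℝ) 1)) (nhds ((1 - M).det)) := by
      have := (hA.matrix_det).tendsto (1:ℝ)
      have h1 : (1:ℝ) • M = M := one_smul _ _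
      simpa [h1] using this.mono_left nhdsWithin_le_nhds
    have hadjc : Filter.Tendsto (fun t : ℝ => (1 - t • M).adjugate i j)
        (nhdsWithin (1:ℝ) (Set.Ico (0:ℝ) 1)) (nhds ((1 - M).adjugate i j)) := by
      have hcontadj : Continuous fun t : ℝ => (1 - t • M).adjugate i j :=
        ((hA.matrix_adjugate).matrix_elem i j)
      have := hcontadj.tendsto (1:ℝ)
      simpa [one_smul] using this.mono_left nhdsWithin_le_nhds
    have hinvdet : Filter.Tendsto (fun t : ℝ => ((1 - t • M).det)⁻¹)
        (nhdsWithin (1:ℝ) (Set.Ico (0:ℝ) 1)) (nhds (((1 - M).det)⁻¹)) :=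
      hdetc.inv₀ hdet
    have := hinvdet.mul hadjc
    have heq : ∀ t : ℝ, (1 - t • M)⁻¹ i j = ((1 - t • M).det)⁻¹ * (1 - t • M).adjugate i j := by
      intro t
      rw [Matrix.inv_def, Ring.inverse_eq_inv']
      simp [Matrix.smul_apply]
    have heq1 : (1 - M)⁻¹ i j = ((1 - M).det)⁻¹ * (1 - M).adjugate i j := by
      rw [Matrix.inv_def, Ring.inverse_eq_inv']
      simp [Matrix.smul_apply]
    rw [heq1]
    simpa [heq] using this
  refine ge_of_tendsto key ?_
  have : ∀ t ∈ Set.Ico (0:ℝ) 1, 0 ≤ (1 - t • M)⁻¹ i j := fun t ht =>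
    stmt17_aux_inv_one_sub_smul_nonneg M hM hrow ht.1 ht.2 i j
  exact eventually_nhdsWithin_of_forall this

lemma stmt17_aux_quad_lower (m di : S → ℝ) (Q : Matrix S S ℝ) (hm : ∀ s, 0 ≤ m s)
    (hQ : ∀ s s', 0 ≤ Q s s') (hrow : ∀ s, ∑ s', Q s s' ≤ 1)
    (hcol : ∀ s', ∑ s, m s * Q s s' = m s' - di s') (x : S → ℝ) :
    (1/2) * ∑ s, di s * x s ^ 2 ≤ x ⬝ᵥ (Matrix.diagonal m * (1 - Q)).mulVec x := by
  have hA : ∀ s s', (Matrix.diagonal m * (1 - Q)) s s'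
      = m s * ((if s = s' then (1:ℝ) else 0) - Q s s') := by
    intro s s'
    rw [Matrix.diagonal_mul]
    simp [Matrix.sub_apply, Matrix.one_apply]
  have expand : x ⬝ᵥ (Matrix.diagonal m * (1 - Q)).mulVec x
      = (∑ s, m s * x s ^ 2) - ∑ s, ∑ s', m s * Q s s' * (x s * x s') := by
    unfold dotProduct Matrix.mulVec
    simp only [hA, dotProduct]
    rw [← Finset.sum_sub_distrib]
    apply Finset.sum_congr rfl
    intro s _
    rw [Finset.mul_sum]
    calc ∑ i, x s * (m s * ((if s = i then (1:ℝ) else 0) - Q s i) * x i)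
        = ∑ i, ((if s = i then m s * x s ^ 2 else 0) - m s * Q s i * (x s * x i)) := by
          apply Finset.sum_congr rfl; intro i _
          by_cases h : s = i <;> simp [h] <;> ring
      _ = m s * x s ^ 2 - ∑ s', m s * Q s s' * (x s * x s') := by
          rw [Finset.sum_sub_distrib, Finset.sum_ite_eq]
          simp
  rw [expand]
  have e1 : (1/2) * (∑ s, m s * x s ^ 2 * ∑ s', Q s s')
      = ∑ s, ∑ s', (1/2) * (m s * Q s s' * x s ^ 2) := by
    rw [Finset.mul_sum]
    apply Finset.sum_congr rfl; intro s _
    rw [Finset.mul_sum, Finset.mul_sum]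
    apply Finset.sum_congr rfl; intro s' _
    ring
  have e2 : (1/2) * (∑ s', (∑ s, m s * Q s s') * x s' ^ 2)
      = ∑ s, ∑ s', (1/2) * (m s * Q s s' * x s' ^ 2) := by
    rw [Finset.sum_comm (f := fun s s' => (1/2) * (m s * Q s s' * x s' ^ 2))]
    rw [Finset.mul_sum]
    apply Finset.sum_congr rfl; intro s' _
    rw [Finset.sum_mul, Finset.mul_sum]
    try (apply Finset.sum_congr rfl; intro s _; ring)
  have key1 : (∑ s, ∑ s', m s * Q s s' * (x s * x s'))
      ≤ (1/2) * (∑ s, m s * x s ^ 2) + (1/2) * ∑ s', (m s' - di s') * x s' ^ 2 := by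
    calc (∑ s, ∑ s', m s * Q s s' * (x s * x s'))
        ≤ ∑ s, ∑ s', ((1/2) * (m s * Q s s' * x s ^ 2) + (1/2) * (m s * Q s s' * x s' ^ 2)) := by
          apply Finset.sum_le_sum; intro s _
          apply Finset.sum_le_sum; intro s' _
          have hmq : 0 ≤ m s * Q s s' := mul_nonneg (hm s) (hQ s s')
          nlinarith [sq_nonneg (x s - x s')]
      _ = (1/2) * (∑ s, m s * x s ^ 2 * ∑ s', Q s s')
            + (1/2) * ∑ s', (∑ s, m s * Q s s') * x s' ^ 2 := by
          rw [e1, e2]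
          rw [← Finset.sum_add_distrib]
          exact Finset.sum_congr rfl fun s _ => Finset.sum_add_distrib
      _ ≤ (1/2) * (∑ s, m s * x s ^ 2) + (1/2) * ∑ s', (m s' - di s') * x s' ^ 2 := by
          have hfir : (∑ s, m s * x s ^ 2 * ∑ s', Q s s') ≤ ∑ s, m s * x s ^ 2 := by
            apply Finset.sum_le_sum; intro s _
            exact mul_le_of_le_one_right (mul_nonneg (hm s) (sq_nonneg _)) (hrow s)
          have hsec : (∑ s', (∑ s, m s * Q s s') * x s' ^ 2)
              = ∑ s', (m s' - di s') * x s' ^ 2 := by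
            apply Finset.sum_congr rfl; intro s' _
            rw [hcol s']
          rw [hsec]
          linarith
  have hsub : (∑ s', (m s' - di s') * x s' ^ 2)
      = (∑ s, m s * x s ^ 2) - ∑ s, di s * x s ^ 2 := by
    rw [← Finset.sum_sub_distrib]
    apply Finset.sum_congr rfl; intro s _; ring
  rw [hsub] at key1
  linarith

end Stmt17Aux

/-- With `J = {s : i(s) = 0}` and `E` the column space of `Φ`,
if every `v ∈ E` vanishing outside `J` is the zero vector, then `C` is negative
definite. -/
theorem stmt17 {S : Type} [Fintype S] [Nonempty S] [DecidableEq S] (n : ℕ) (hn : 1 ≤ n)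
    (P : Matrix S S ℝ) (hP0 : ∀ s s', 0 ≤ P s s') (hP1 : ∀ s, ∑ s', P s s' = 1)
    (γf lamf : S → ℝ)
    (hγ : ∀ s, γf s ∈ Set.Icc (0 : ℝ) 1) (hlam : ∀ s, lamf s ∈ Set.Icc (0 : ℝ) 1)
    (h1 : IsUnit (1 - P * Matrix.diagonal γf))
    (h2 : IsUnit (1 - P * Matrix.diagonal γf * Matrix.diagonal lamf))
    (d ifun : S → ℝ) (hd : ∀ s, 0 < d s) (hi : ∀ s, 0 ≤ ifun s)
    (Φ : Matrix S (Fin n) ℝ)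
    (hΦ : LinearIndependent ℝ fun j : Fin n => fun s : S => Φ s j)
    (hE : ∀ x : Fin n → ℝ, (∀ s, ifun s ≠ 0 → Φ.mulVec x s = 0) → Φ.mulVec x = 0) :
    ∃ c : ℝ, 0 < c ∧
      ∀ y : Fin n → ℝ, y ⬝ᵥ (Cof P γf lamf d ifun Φ).mulVec y ≤ -c * (y ⬝ᵥ y) := by
  set A : Matrix S S ℝ := 1 - P * Matrix.diagonal γf * Matrix.diagonal lamf with hA
  set B : Matrix S S ℝ := 1 - P * Matrix.diagonal γf with hB
  set Q : Matrix S S ℝ := Qof P γf lamf with hQdef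
  set m : S → ℝ := MdiagOf P γf lamf d ifun with hmdef
  have hAdet : IsUnit A.det := (Matrix.isUnit_iff_isUnit_det _).mp h2
  have hBdet : IsUnit B.det := (Matrix.isUnit_iff_isUnit_det _).mp h1
  -- entries of P·Γ·Λ
  have hPGL : ∀ i j, (P * Matrix.diagonal γf * Matrix.diagonal lamf) i j
      = P i j * γf j * lamf j := by
    intro i j
    rw [Matrix.mul_diagonal, Matrix.mul_diagonal]
  have hPG : ∀ i j, (P * Matrix.diagonal γf) i j = P i j * γf j := fun i j =>
    Matrix.mul_diagonal _ _ _ _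
  -- A⁻¹ nonneg
  have hAinv : ∀ i j, 0 ≤ A⁻¹ i j := by
    apply stmt17_aux_inv_one_sub_nonneg
    · intro i j; rw [hPGL]
      exact mul_nonneg (mul_nonneg (hP0 i j) (hγ j).1) (hlam j).1
    · intro i
      calc ∑ j, (P * Matrix.diagonal γf * Matrix.diagonal lamf) i j
          ≤ ∑ j, P i j := by
            apply Finset.sum_le_sum; intro j _
            rw [hPGL]
            have a1 : P i j * γf j ≤ P i j := mul_le_of_le_one_right (hP0 i j) (hγ j).2
            have a2 : P i j * γf j * lamf j ≤ P i j * γf j :=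
              mul_le_of_le_one_right (mul_nonneg (hP0 i j) (hγ j).1) (hlam j).2
            linarith
        _ = 1 := hP1 i
    · exact h2
  -- Q = A⁻¹ (A - B)
  have h1mQ : (1 : Matrix S S ℝ) - Q = A⁻¹ * B := by
    rw [hQdef]; unfold Qof; rw [← hA, ← hB]; rw [sub_sub_cancel]
  have hQeq : Q = A⁻¹ * (A - B) := by
    rw [Matrix.mul_sub, Matrix.nonsing_inv_mul _ hAdet]
    rw [hQdef]; unfold Qof; rw [← hA, ← hB]
  have hABnn : ∀ k j, 0 ≤ (A - B) k j := by
    intro k j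
    rw [hA, hB]
    simp only [Matrix.sub_apply]
    rw [hPGL, hPG]
    have h0 := mul_nonneg (hP0 k j) (hγ j).1
    nlinarith [(hlam j).1, (hlam j).2]
  have hQnn : ∀ i j, 0 ≤ Q i j := by
    intro i j
    rw [hQeq, Matrix.mul_apply]
    exact Finset.sum_nonneg fun k _ => mul_nonneg (hAinv i k) (hABnn k j)
  -- row sums of Q
  have hBrow : ∀ k, 0 ≤ ∑ j, B k j := by
    intro k
    have : ∑ j, B k j = 1 - ∑ j, P k j * γf j := by
      rw [hB]
      simp only [Matrix.sub_apply, Finset.sum_sub_distrib]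
      congr 1
      · simp [Matrix.one_apply]
      · exact Finset.sum_congr rfl fun j _ => hPG k j
    rw [this]
    have : ∑ j, P k j * γf j ≤ ∑ j, P k j := by
      apply Finset.sum_le_sum; intro j _
      exact mul_le_of_le_one_right (hP0 k j) (hγ j).2
    rw [← hP1 k] at *
    linarith
  have hQrow : ∀ i, ∑ j, Q i j ≤ 1 := by
    intro i
    have hQone : ∀ j, Q i j = (if i = j then (1:ℝ) else 0) - (A⁻¹ * B) i j := by
      intro j
      have := congrFun (congrFun h1mQ i) j
      simp only [Matrix.sub_apply, Matrix.one_apply] at this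
      linarith
    have hsum : ∑ j, (A⁻¹ * B) i j = ∑ k, A⁻¹ i k * ∑ j, B k j := by
      simp only [Matrix.mul_apply]
      rw [Finset.sum_comm]
      exact Finset.sum_congr rfl fun k _ => (Finset.mul_sum _ _ _).symm
    have hnn : 0 ≤ ∑ j, (A⁻¹ * B) i j := by
      rw [hsum]
      exact Finset.sum_nonneg fun k _ => mul_nonneg (hAinv i k) (hBrow k)
    calc ∑ j, Q i j = (∑ j, if i = j then (1:ℝ) else 0) - ∑ j, (A⁻¹ * B) i j := by
          rw [← Finset.sum_sub_distrib]
          exact Finset.sum_congr rfl fun j _ => hQone j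
      _ ≤ 1 := by
          rw [Finset.sum_ite_eq]
          simp [hnn]
  -- 1 - Q is a unit
  have hu1mQ : IsUnit ((1 : Matrix S S ℝ) - Q) := by
    rw [h1mQ]
    rw [Matrix.isUnit_iff_isUnit_det, Matrix.det_mul]
    refine IsUnit.mul ?_ hBdet
    rw [Matrix.det_nonsing_inv]
    exact (isUnit_iff_ne_zero).mpr (by
      rw [Ring.inverse_eq_inv']
      exact inv_ne_zero hAdet.ne_zero)
  have hdet1mQ : IsUnit ((1 : Matrix S S ℝ) - Q).det :=
    (Matrix.isUnit_iff_isUnit_det _).mp hu1mQ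
  have hNnn : ∀ i j, 0 ≤ ((1 : Matrix S S ℝ) - Q)⁻¹ i j :=
    stmt17_aux_inv_one_sub_nonneg Q hQnn hQrow hu1mQ
  -- m ≥ 0
  have hmnn : ∀ s, 0 ≤ m s := by
    intro s
    rw [hmdef]
    unfold MdiagOf
    rw [← hQdef]
    simp only [Matrix.vecMul, dotProduct]
    exact Finset.sum_nonneg fun k _ =>
      mul_nonneg (mul_nonneg (hd k).le (hi k)) (hNnn k s)
  -- column identity
  have hvm : Matrix.vecMul m (1 - Q) = fun s => d s * ifun s := by
    rw [hmdef]
    unfold MdiagOf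
    rw [← hQdef, Matrix.vecMul_vecMul, Matrix.nonsing_inv_mul _ hdet1mQ, Matrix.vecMul_one]
  have hcol : ∀ s', ∑ s, m s * Q s s' = m s' - d s' * ifun s' := by
    intro s'
    have h := congrFun hvm s'
    simp only [Matrix.vecMul, dotProduct, Matrix.sub_apply, Matrix.one_apply] at h
    have hsplit : ∑ s, m s * ((if s = s' then (1:ℝ) else 0) - Q s s')
        = m s' - ∑ s, m s * Q s s' := by
      rw [Finset.sum_congr rfl (fun s _ => (show m s * ((if s = s' then (1:ℝ) else 0) - Q s s')
          = (if s = s' then m s else 0) - m s * Q s s' by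
        by_cases hss : s = s' <;> simp [hss] <;> ring))]
      rw [Finset.sum_sub_distrib, Finset.sum_ite_eq']
      simp
    rw [hsplit] at h
    linarith
  -- quadratic form lower bound via stmt17_aux_quad_lower
  have hquad : ∀ y : Fin n → ℝ,
      (1/2) * (∑ s, (d s * ifun s) * ((Φ.mulVec y) s) ^ 2)
        ≤ -(y ⬝ᵥ (Cof P γf lamf d ifun Φ).mulVec y) := by
    intro y
    have hC : (Cof P γf lamf d ifun Φ)
        = -(Φ.transpose * (Matrix.diagonal m * (1 - Q)) * Φ) := by
      unfold Cof
      rw [← hmdef, ← hQdef, Matrix.mul_assoc Φ.transpose, ← Matrix.mul_assoc Φ.transpose]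
    have hdot : y ⬝ᵥ (Cof P γf lamf d ifun Φ).mulVec y
        = -((Φ.mulVec y) ⬝ᵥ (Matrix.diagonal m * (1 - Q)).mulVec (Φ.mulVec y)) := by
      rw [hC]
      rw [Matrix.neg_mulVec, dotProduct_neg]
      congr 1
      rw [← Matrix.mulVec_mulVec, ← Matrix.mulVec_mulVec,
        Matrix.dotProduct_mulVec y, Matrix.vecMul_transpose]
    rw [hdot, neg_neg]
    exact stmt17_aux_quad_lower m (fun s => d s * ifun s) Q hmnn hQnn hQrow hcol (Φ.mulVec y)
  -- the auxiliary quadratic g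
  set g : (Fin n → ℝ) → ℝ := fun y => ∑ s, (d s * ifun s) * ((Φ.mulVec y) s) ^ 2 with hg
  have hgnn : ∀ y, 0 ≤ g y := fun y => Finset.sum_nonneg fun s _ =>
    mul_nonneg (mul_nonneg (hd s).le (hi s)) (sq_nonneg _)
  have hgpos : ∀ y : Fin n → ℝ, y ≠ 0 → 0 < g y := by
    intro y hy
    rcases lt_or_eq_of_le (hgnn y) with h | h
    · exact h
    exfalso
    have hterm : ∀ s, (d s * ifun s) * ((Φ.mulVec y) s) ^ 2 = 0 := by
      intro s
      have := (Finset.sum_eq_zero_iff_of_nonneg (fun s _ =>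
        mul_nonneg (mul_nonneg (hd s).le (hi s)) (sq_nonneg _))).mp h.symm
      exact this s (Finset.mem_univ s)
    have hvan : ∀ s, ifun s ≠ 0 → Φ.mulVec y s = 0 := by
      intro s hs
      have hpos : 0 < d s * ifun s := mul_pos (hd s) (lt_of_le_of_ne (hi s) (Ne.symm hs))
      have h2 := (mul_eq_zero.mp (hterm s)).resolve_left hpos.ne'
      exact pow_eq_zero_iff (two_ne_zero) |>.mp h2
    have hy0 : Φ.mulVec y = 0 := hE y hvan
    have := (Fintype.linearIndependent_iff.mp hΦ) y (by
      funext s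
      have hcf := congrFun hy0 s
      simp only [Matrix.mulVec, dotProduct, Pi.zero_apply] at hcf
      rw [Finset.sum_apply]
      simp only [Pi.smul_apply, smul_eq_mul, Pi.zero_apply]
      rw [← hcf]
      exact Finset.sum_congr rfl fun j _ => mul_comm _ _)
    exact hy (funext this)
  -- continuity of g
  have hgcont : Continuous g := by
    apply continuous_finset_sum
    intro s _
    apply Continuous.mul continuous_const
    apply Continuous.pow
    have hrw : (fun b : Fin n → ℝ => (Φ.mulVec b) s) = fun b => ∑ j, Φ s j * b j := by
      funext b
      simp [Matrix.mulVec, dotProduct]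
    rw [hrw]
    exact continuous_finset_sum _ fun j _ => (continuous_const.mul (continuous_apply j))
  -- compact sphere argument
  set K : Set (Fin n → ℝ) := {y | y ⬝ᵥ y = 1} with hKdef
  have hdotcont : Continuous fun y : Fin n → ℝ => y ⬝ᵥ y :=
    continuous_finset_sum _ fun j _ => (continuous_apply j).mul (continuous_apply j)
  have hKclosed : IsClosed K := isClosed_eq hdotcont continuous_const
  have hKbdd : Bornology.IsBounded K := by
    apply Bornology.IsBounded.subset (Metric.isBounded_closedBall (x := (0 : Fin n → ℝ)) (r := 1))
    intro y hy
    rw [Metric.mem_closedBall, dist_zero_right]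
    rw [pi_norm_le_iff_of_nonneg (by norm_num)]
    intro i
    rw [Real.norm_eq_abs, abs_le]
    have hy1 : y ⬝ᵥ y = 1 := hy
    have h1 : y i ^ 2 ≤ 1 := by
      have hss := Finset.single_le_sum (f := fun j => y j * y j)
        (fun j _ => mul_self_nonneg (y j)) (Finset.mem_univ i)
      calc y i ^ 2 = y i * y i := sq (y i) ▸ pow_two (y i)
        _ ≤ ∑ j, y j * y j := hss
        _ = y ⬝ᵥ y := rfl
        _ = 1 := hy1
    constructor <;> nlinarith
  have hKcompact : IsCompact K := Metric.isCompact_of_isClosed_isBounded hKclosed hKbdd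
  have hKne : K.Nonempty := by
    refine ⟨fun i => if i = ⟨0, hn⟩ then 1 else 0, ?_⟩
    simp only [hKdef, Set.mem_setOf_eq, dotProduct]
    rw [Finset.sum_eq_single ⟨0, hn⟩]
    · simp
    · intro b _ hb; simp [hb]
    · intro hb; exact absurd (Finset.mem_univ _) hb
  obtain ⟨y0, hy0K, hmin'⟩ := hKcompact.exists_isMinOn hKne hgcont.continuousOn
  have hmin : ∀ z ∈ K, g y0 ≤ g z := fun z hz => hmin' hz
  have hy0ne : y0 ≠ 0 := by
    intro hcon
    rw [hKdef, Set.mem_setOf_eq, hcon] at hy0K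
    simp [dotProduct] at hy0K
  have hc0 : 0 < g y0 := hgpos y0 hy0ne
  refine ⟨g y0 / 2, by positivity, ?_⟩
  intro y
  -- scaling argument: g y ≥ g y0 * (y ⬝ᵥ y)
  have hscale : g y0 * (y ⬝ᵥ y) ≤ g y := by
    by_cases hy : y = 0
    · subst hy
      simp [dotProduct, hg, Matrix.mulVec_zero]
    · have hyy : 0 < y ⬝ᵥ y := by
        rcases Function.ne_iff.mp hy with ⟨i, hi0⟩
        have hi0' : y i ≠ 0 := hi0
        unfold dotProduct
        exact Finset.sum_pos' (fun j _ => mul_self_nonneg (y j))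
          ⟨i, Finset.mem_univ i, mul_self_pos.mpr hi0'⟩
      set a : ℝ := (Real.sqrt (y ⬝ᵥ y))⁻¹ with ha
      have hsq : a ^ 2 * (y ⬝ᵥ y) = 1 := by
        rw [ha, inv_pow, Real.sq_sqrt hyy.le]
        field_simp
      have hmem : (a • y) ∈ K := by
        rw [hKdef, Set.mem_setOf_eq]
        have : (a • y) ⬝ᵥ (a • y) = a ^ 2 * (y ⬝ᵥ y) := by
          unfold dotProduct
          rw [Finset.mul_sum]
          apply Finset.sum_congr rfl
          intro j _
          simp [Pi.smul_apply, smul_eq_mul]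
          ring
        rw [this, hsq]
      have hga : g (a • y) = a ^ 2 * g y := by
        rw [hg]
        simp only
        rw [Finset.mul_sum]
        apply Finset.sum_congr rfl
        intro s _
        rw [Matrix.mulVec_smul]
        simp only [Pi.smul_apply, smul_eq_mul]
        ring
      have := hmin _ hmem
      rw [hga] at this
      have ha2 : a ^ 2 = (y ⬝ᵥ y)⁻¹ := by
        rw [ha, inv_pow, Real.sq_sqrt hyy.le]
      calc g y0 * (y ⬝ᵥ y) = (y ⬝ᵥ y) * g y0 := by ring
        _ ≤ (y ⬝ᵥ y) * ((y ⬝ᵥ y)⁻¹ * g y) := by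
            exact mul_le_mul_of_nonneg_left (hmin _ hmem |>.trans_eq (by rw [hga, ha2])) hyy.le
        _ = g y := by field_simp
  have h1 := hquad y
  have : y ⬝ᵥ (Cof P γf lamf d ifun Φ).mulVec y ≤ -((1/2) * g y) := by linarith
  calc y ⬝ᵥ (Cof P γf lamf d ifun Φ).mulVec y ≤ -((1/2) * g y) := this
    _ ≤ -(g y0 / 2) * (y ⬝ᵥ y) := by nlinarith [hscale]
end

section
/- For each s ∈ S, the diagonal entry M̄_ss equals 0 if and only if the s-th row and the s-th column of G are entirely zero, i.e., G_{s s̄} = 0 and G_{s̄ s} = 0 for all s̄ ∈ S. -/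
open Matrix

noncomputable section

/-- The diagonal of `M̄`: `dᵀ(I−Q)⁻¹`. -/
def MdiagSub {S : Type*} [Fintype S] [DecidableEq S]
    (Q : Matrix S S ℝ) (d : S → ℝ) : S → ℝ :=
  Matrix.vecMul d (1 - Q)⁻¹

/-- `G = M̄(I−Q) + (M̄(I−Q))ᵀ`. -/
def Gmat {S : Type*} [Fintype S] [DecidableEq S]
    (Q : Matrix S S ℝ) (d : S → ℝ) : Matrix S S ℝ :=
  Matrix.diagonal (MdiagSub Q d) * (1 - Q) +
    (Matrix.diagonal (MdiagSub Q d) * (1 - Q)).transpose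

end

/-!
`M̄ = dᵀ(I−Q)⁻¹` is nonnegative because `(I−Q)⁻¹` is, by the minimum principle for
substochastic `Q`: if `(I−Q)y ≥ 0` and `y` had a negative minimum, every row of `Q` at a
minimiser would be stochastic and supported on the minimisers, making `I−Q` singular.
Reading `M̄(I−Q) = dᵀ` in column `s` gives `d_s = M̄_ss − ∑ₜ M̄_tt Q_ts`, so `M̄_ss = 0`
forces `M̄_tt Q_ts = 0` for all `t`, which kills row and column `s` of `G`. Conversely
`G_ss = 2 M̄_ss (1 − Q_ss)`, and `Q_ss = 1` would make row `s` of `I−Q` vanish.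
-/

section

variable {S : Type*} [Fintype S]

theorem Finset.sum_eq_one_and_eq_of_sum_mul_le_min {q y : S → ℝ} {m : ℝ} (hm : m < 0)
    (hq0 : ∀ t, 0 ≤ q t) (hq1 : ∑ t, q t ≤ 1) (hmin : ∀ t, m ≤ y t)
    (hle : ∑ t, q t * y t ≤ m) :
    ∑ t, q t = 1 ∧ ∀ t, q t ≠ 0 → y t = m := by
  have hexcess : ∑ t, q t * (y t - m) = ∑ t, q t * y t - (∑ t, q t) * m := by
    simp only [mul_sub, sum_sub_distrib, sum_mul]
  have hnonneg : ∀ t ∈ univ, 0 ≤ q t * (y t - m) := fun t _ =>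
    mul_nonneg (hq0 t) (sub_nonneg.2 (hmin t))
  have hscale : m ≤ (∑ t, q t) * m := by nlinarith
  have hzero : ∑ t, q t * (y t - m) = 0 := by linarith [sum_nonneg hnonneg]
  refine ⟨(mul_eq_left₀ hm.ne).1 (by linarith [sum_nonneg hnonneg]), fun t ht => ?_⟩
  rcases mul_eq_zero.1 ((sum_eq_zero_iff_of_nonneg hnonneg).1 hzero t (mem_univ t)) with h | h
  · exact absurd h ht
  · linarith

variable [DecidableEq S]

theorem Matrix.not_isUnit_of_rows_closed_of_rowSum_eq_zero {K : Type*} [Field K]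
    (M : Matrix S S K) (A : Finset S) (hA : A.Nonempty)
    (hclosed : ∀ i ∈ A, ∀ j ∉ A, M i j = 0) (hsum : ∀ i ∈ A, ∑ j, M i j = 0) :
    ¬ IsUnit M := by
  set B : Matrix A A K := M.submatrix (↑) (↑)
  have hB : ∀ i : A, ∀ x : S → K, (B *ᵥ fun j => x j) i = (M *ᵥ x) i := by
    intro i x
    simp only [mulVec, dotProduct, B, submatrix_apply]
    rw [Finset.sum_coe_sort A (fun j => M i j * x j)]
    refine Finset.sum_subset (Finset.subset_univ A) fun j _ hj => ?_
    rw [hclosed i i.2 j hj, zero_mul]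
  have hB_sing : ¬ IsUnit B := by
    rw [← mulVec_injective_iff_isUnit]
    obtain ⟨a, ha⟩ := hA
    intro hinj
    have hker : B *ᵥ (fun _ => 1) = 0 := by
      ext i
      rw [hB i (fun _ => 1), Pi.zero_apply, ← hsum i i.2]
      simp only [mulVec, dotProduct, mul_one]
    exact one_ne_zero (congrFun (hinj (hker.trans (mulVec_zero B).symm)) ⟨a, ha⟩)
  rw [← mulVec_surjective_iff_isUnit] at hB_sing ⊢
  intro hM
  refine hB_sing fun b => ?_
  obtain ⟨x, hx⟩ := hM fun i => if h : i ∈ A then b ⟨i, h⟩ else 0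
  refine ⟨fun j => x j, funext fun i => ?_⟩
  rw [hB, hx]
  exact dif_pos i.2

theorem one_sub_mulVec_apply {R : Type*} [Ring R] (P : Matrix S S R) (y : S → R) (i : S) :
    ((1 - P) *ᵥ y) i = y i - ∑ t, P i t * y t := by
  rw [sub_mulVec, one_mulVec, Pi.sub_apply]
  rfl

theorem vecMul_one_sub_apply {R : Type*} [Ring R] (P : Matrix S S R) (v : S → R) (j : S) :
    (v ᵥ* (1 - P)) j = v j - ∑ t, v t * P t j := by
  rw [vecMul_sub, vecMul_one, Pi.sub_apply]
  rfl

theorem Gmat_apply (Q : Matrix S S ℝ) (d : S → ℝ) (a b : S) :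
    Gmat Q d a b = MdiagSub Q d a * (1 - Q) a b + MdiagSub Q d b * (1 - Q) b a := by
  simp only [Gmat, Matrix.add_apply, transpose_apply, diagonal_mul]

variable {Q : Matrix S S ℝ}

theorem nonneg_of_one_sub_mulVec_nonneg (hQ0 : ∀ s t, 0 ≤ Q s t)
    (hQ1 : ∀ s, ∑ t, Q s t ≤ 1) (hinv : IsUnit (1 - Q)) {y : S → ℝ}
    (hy : ∀ s, 0 ≤ ((1 - Q) *ᵥ y) s) (s : S) : 0 ≤ y s := by
  by_contra! hneg
  have : Nonempty S := ⟨s⟩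
  obtain ⟨s₀, hs₀⟩ := Finite.exists_min y
  set m := y s₀
  have hm : m < 0 := (hs₀ s).trans_lt hneg
  have hconc : ∀ i, y i = m → ∑ t, Q i t = 1 ∧ ∀ t, Q i t ≠ 0 → y t = m := fun i hi =>
    Finset.sum_eq_one_and_eq_of_sum_mul_le_min hm (hQ0 i) (hQ1 i) hs₀ (by
      have := hy i
      rw [one_sub_mulVec_apply, hi] at this
      linarith)
  refine Matrix.not_isUnit_of_rows_closed_of_rowSum_eq_zero (1 - Q) {i | y i = m}
    ⟨s₀, by simp [m]⟩ (fun i hi j hj => ?_) (fun i hi => ?_) hinv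
  · simp only [Finset.mem_filter, Finset.mem_univ, true_and] at hi hj
    have hij : i ≠ j := by rintro rfl; exact hj hi
    rw [Matrix.sub_apply, one_apply_ne hij, zero_sub, neg_eq_zero]
    by_contra h
    exact hj ((hconc i hi).2 j h)
  · simp only [Finset.mem_filter, Finset.mem_univ, true_and] at hi
    simp [Matrix.sub_apply, one_apply, Finset.sum_sub_distrib, (hconc i hi).1]

theorem diag_ne_one_of_isUnit_one_sub (hQ0 : ∀ s t, 0 ≤ Q s t)
    (hQ1 : ∀ s, ∑ t, Q s t ≤ 1) (hinv : IsUnit (1 - Q)) (s : S) : Q s s ≠ 1 := by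
  intro hss
  have hrow : ∀ t, (1 - Q) s t = 0 := by
    intro t
    rcases eq_or_ne s t with rfl | hst
    · rw [Matrix.sub_apply, one_apply_eq, hss, sub_self]
    · have := Finset.add_le_sum (fun t _ => hQ0 s t) (Finset.mem_univ s) (Finset.mem_univ t) hst
      rw [Matrix.sub_apply, one_apply_ne hst, zero_sub, neg_eq_zero]
      linarith [hQ0 s t, hQ1 s]
  rw [isUnit_iff_isUnit_det, det_eq_zero_of_row_eq_zero s hrow] at hinv
  exact not_isUnit_zero hinv

theorem inv_one_sub_nonneg (hQ0 : ∀ s t, 0 ≤ Q s t) (hQ1 : ∀ s, ∑ t, Q s t ≤ 1)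
    (hinv : IsUnit (1 - Q)) (i j : S) : 0 ≤ (1 - Q)⁻¹ i j := by
  have hcol : (1 - Q) *ᵥ ((1 - Q)⁻¹ *ᵥ Pi.single j 1) = Pi.single j 1 := by
    rw [mulVec_mulVec, mul_nonsing_inv _ ((isUnit_iff_isUnit_det _).1 hinv), one_mulVec]
  have := nonneg_of_one_sub_mulVec_nonneg hQ0 hQ1 hinv
    (fun s => hcol ▸ Pi.single_nonneg.2 zero_le_one s) i
  rwa [mulVec_single_one, col_apply] at this

theorem MdiagSub_nonneg (hQ0 : ∀ s t, 0 ≤ Q s t) (hQ1 : ∀ s, ∑ t, Q s t ≤ 1)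
    (hinv : IsUnit (1 - Q)) {d : S → ℝ} (hd : ∀ s, 0 ≤ d s) (t : S) :
    0 ≤ MdiagSub Q d t :=
  Finset.sum_nonneg fun s _ => mul_nonneg (hd s) (inv_one_sub_nonneg hQ0 hQ1 hinv s t)

theorem MdiagSub_vecMul_one_sub (hinv : IsUnit (1 - Q)) (d : S → ℝ) :
    MdiagSub Q d ᵥ* (1 - Q) = d := by
  rw [MdiagSub, vecMul_vecMul, nonsing_inv_mul _ ((isUnit_iff_isUnit_det _).1 hinv),
    vecMul_one]

theorem MdiagSub_mul_eq_zero_of_MdiagSub_eq_zero (hQ0 : ∀ s t, 0 ≤ Q s t)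
    (hQ1 : ∀ s, ∑ t, Q s t ≤ 1) (hinv : IsUnit (1 - Q)) {d : S → ℝ} (hd : ∀ s, 0 ≤ d s)
    {s : S} (hs : MdiagSub Q d s = 0) (t : S) : MdiagSub Q d t * Q t s = 0 := by
  have hterm : ∀ t ∈ Finset.univ, 0 ≤ MdiagSub Q d t * Q t s := fun t _ =>
    mul_nonneg (MdiagSub_nonneg hQ0 hQ1 hinv hd t) (hQ0 t s)
  have hcol := congrFun (MdiagSub_vecMul_one_sub hinv d) s
  rw [vecMul_one_sub_apply, hs, zero_sub] at hcol
  refine (Finset.sum_eq_zero_iff_of_nonneg hterm).1 ?_ t (Finset.mem_univ t)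
  linarith [Finset.sum_nonneg hterm, hd s]

end

theorem stmt18_general {S : Type} [Fintype S] [DecidableEq S]
    (Q : Matrix S S ℝ) (hQ0 : ∀ s s', 0 ≤ Q s s') (hQ1 : ∀ s, ∑ s', Q s s' ≤ 1)
    (hinv : IsUnit (1 - Q))
    (d : S → ℝ) (hd : ∀ s, 0 ≤ d s) :
    ∀ s : S, MdiagSub Q d s = 0 ↔
      ∀ sb : S, Gmat Q d s sb = 0 ∧ Gmat Q d sb s = 0 := by
  intro s
  constructor
  · intro hs sb
    have hrow : Gmat Q d s sb = 0 := by
      rw [Gmat_apply, hs, zero_mul, zero_add]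
      rcases eq_or_ne sb s with rfl | hne
      · rw [hs, zero_mul]
      · rw [Matrix.sub_apply, one_apply_ne hne, zero_sub, mul_neg,
          MdiagSub_mul_eq_zero_of_MdiagSub_eq_zero hQ0 hQ1 hinv hd hs sb, neg_zero]
    exact ⟨hrow, by rwa [Gmat_apply, add_comm, ← Gmat_apply]⟩
  · intro h
    have hss := (h s).1
    rw [Gmat_apply, ← two_mul, mul_eq_zero, mul_eq_zero] at hss
    have hdiag : (1 - Q) s s ≠ 0 := by
      rw [Matrix.sub_apply, one_apply_eq, sub_ne_zero]
      exact (diag_ne_one_of_isUnit_one_sub hQ0 hQ1 hinv s).symm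
    rcases hss with h2 | hs | hs
    · exact absurd h2 two_ne_zero
    · exact hs
    · exact absurd hs hdiag

/-- For `Q` substochastic with `I − Q` invertible and `d ≥ 0`,
`M̄_ss = 0` iff the `s`-th row and `s`-th column of `G` are entirely zero. -/
theorem stmt18 {S : Type} [Fintype S] [Nonempty S] [DecidableEq S]
    (Q : Matrix S S ℝ) (hQ0 : ∀ s s', 0 ≤ Q s s') (hQ1 : ∀ s, ∑ s', Q s s' ≤ 1)
    (hinv : IsUnit (1 - Q))
    (d : S → ℝ) (hd : ∀ s, 0 ≤ d s) :
    ∀ s : S, MdiagSub Q d s = 0 ↔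
      ∀ sb : S, Gmat Q d s sb = 0 ∧ Gmat Q d sb s = 0 :=
  stmt18_general Q hQ0 hQ1 hinv d hd
end
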